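/- arXiv:2210.00699 — 9 statements merged into one kernel-verified Lean document; each statement's English description precedes it below -/
import Mathlib

section
/- Let p be a prime and f(x) a monic irreducible polynomial over F_p with even order e, and let h be a positive integer. Let t be the smallest nonnegative integer with p^t ≥ h. Then ord(f^h) = e·p^t and f(x)^h divides x^{(e·p^t)/2} + 1. -/
open Polynomial

lemma frob_aux (p : ℕ) (hp : p.Prime) (n k : ℕ) :
    ((X : Polynomial (ZMod p)) ^ n - 1) ^ p ^ k = X ^ (n * p ^ k) - 1 := by
  haveI : Fact p.Prime := ⟨hp⟩
  rw [sub_pow_char_pow, one_pow, ← pow_mul]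

/-- If `f ∣ X^m - 1` with `m > 0`, then the order `e` divides `m`. -/
lemma ord_dvd_aux (p : ℕ) (f : Polynomial (ZMod p)) (e : ℕ)
    (hord : IsLeast {m : ℕ | 0 < m ∧ f ∣ X ^ m - 1} e)
    (m : ℕ) (hm : 0 < m) (hdvd : f ∣ X ^ m - 1) : e ∣ m := by
  have he0 : 0 < e := hord.1.1
  have hfe : f ∣ X ^ e - 1 := hord.1.2
  set r := m % e with hr
  set q := m / e with hq
  have hmod : e * q + r = m := Nat.div_add_mod m e
  have h1 : f ∣ (X : Polynomial (ZMod p)) ^ (e * q) - 1 := by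
    refine hfe.trans ?_
    have := sub_dvd_pow_sub_pow ((X : Polynomial (ZMod p)) ^ e) 1 q
    rwa [one_pow, ← pow_mul] at this
  have h2 : f ∣ (X : Polynomial (ZMod p)) ^ r - 1 := by
    have key : (X : Polynomial (ZMod p)) ^ r - 1 =
        (X ^ m - 1) - X ^ r * (X ^ (e * q) - 1) := by
      rw [← hmod, pow_add]
      ring
    rw [key]
    exact dvd_sub hdvd (Dvd.dvd.mul_left h1 _)
  by_contra hcon
  have hr0 : 0 < r := Nat.pos_of_ne_zero fun h0 => hcon (Nat.dvd_of_mod_eq_zero h0)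
  have : e ≤ r := hord.2 ⟨hr0, h2⟩
  exact absurd (Nat.mod_lt m he0) (not_lt.mpr (hr ▸ this))

/-- Let `f` be a monic irreducible polynomial over `F_p` with even order `e`, and let
`h` be a positive integer. Let `t` be the smallest nonnegative integer with `p^t ≥ h`.
Then `ord(f^h) = e * p^t` and `f^h ∣ X^((e*p^t)/2) + 1`. -/
theorem stmt_1 (p : ℕ) (hp : p.Prime) (f : Polynomial (ZMod p))
    (hmonic : f.Monic) (hirr : Irreducible f) (e : ℕ)
    (hord : IsLeast {m : ℕ | 0 < m ∧ f ∣ X ^ m - 1} e) (he : Even e)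
    (h : ℕ) (hh : 0 < h) (t : ℕ) (ht : IsLeast {s : ℕ | h ≤ p ^ s} t) :
    IsLeast {m : ℕ | 0 < m ∧ f ^ h ∣ X ^ m - 1} (e * p ^ t) ∧
      f ^ h ∣ X ^ (e * p ^ t / 2) + 1 := by
  haveI : Fact p.Prime := ⟨hp⟩
  have he0 : 0 < e := hord.1.1
  have hfe : f ∣ X ^ e - 1 := hord.1.2
  have hprime : Prime f := hirr.prime
  have hfne : f ≠ 0 := hmonic.ne_zero
  -- p does not divide e
  have hpe : ¬ p ∣ e := by
    rintro ⟨e', rfl⟩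
    have he' : 0 < e' := Nat.pos_of_mul_pos_left (by rwa [Nat.mul_comm] at he0)
    have : f ∣ ((X : Polynomial (ZMod p)) ^ e' - 1) ^ p := by
      have := frob_aux p hp e' 1
      rw [pow_one] at this
      rw [Nat.mul_comm] at hfe
      rwa [this]
    have hfd : f ∣ (X : Polynomial (ZMod p)) ^ e' - 1 := hprime.dvd_of_dvd_pow this
    have hle : p * e' ≤ e' := hord.2 ⟨he', hfd⟩
    have : 2 * e' ≤ p * e' := Nat.mul_le_mul_right e' hp.two_le
    omega
  -- upper divisibility: f^h ∣ X^(e*p^t) - 1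
  have hupper : f ^ h ∣ (X : Polynomial (ZMod p)) ^ (e * p ^ t) - 1 := by
    rw [← frob_aux p hp e t]
    exact (pow_dvd_pow f ht.1).trans (pow_dvd_pow_of_dvd hfe _)
  -- e/2 part
  obtain ⟨d, hd⟩ := he
  have hde : e = 2 * d := by omega
  have hd0 : 0 < d := by omega
  have hhalf : e * p ^ t / 2 = d * p ^ t := by
    rw [hde, Nat.mul_assoc, Nat.mul_div_cancel_left _ (by norm_num)]
  -- f does not divide X^(d*p^t) - 1
  have hnd : ¬ f ∣ (X : Polynomial (ZMod p)) ^ (d * p ^ t) - 1 := by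
    intro hcon
    rw [← frob_aux p hp d t] at hcon
    have : f ∣ (X : Polynomial (ZMod p)) ^ d - 1 := hprime.dvd_of_dvd_pow hcon
    have : e ≤ d := hord.2 ⟨hd0, this⟩
    omega
  -- coprimality and the X^... + 1 divisibility
  have hcop : IsCoprime (f ^ h) ((X : Polynomial (ZMod p)) ^ (d * p ^ t) - 1) :=
    (hirr.coprime_iff_not_dvd.mpr hnd).pow_left
  have hfactor : (X : Polynomial (ZMod p)) ^ (e * p ^ t) - 1 =
      ((X : Polynomial (ZMod p)) ^ (d * p ^ t) + 1) * (X ^ (d * p ^ t) - 1) := by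
    rw [hde, mul_assoc, two_mul, pow_add]
    ring
  have hplus : f ^ h ∣ (X : Polynomial (ZMod p)) ^ (d * p ^ t) + 1 := by
    refine hcop.dvd_of_dvd_mul_right ?_
    rw [← hfactor]; exact hupper
  refine ⟨⟨⟨Nat.mul_pos he0 (pow_pos hp.pos t), hupper⟩, ?_⟩, by rwa [hhalf]⟩
  -- lower bound
  rintro m ⟨hm0, hmdvd⟩
  set a := m.factorization p with ha
  set m' := m / p ^ a with hm'
  have hfact : p ^ a * m' = m := Nat.ordProj_mul_ordCompl_eq_self m p
  have hm'0 : 0 < m' := by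
    rcases Nat.eq_zero_or_pos m' with h0 | h0
    · rw [h0, Nat.mul_zero] at hfact; omega
    · exact h0
  have hpm' : ¬ p ∣ m' := Nat.not_dvd_ordCompl hp hm0.ne'
  have hrw : (X : Polynomial (ZMod p)) ^ m - 1 = ((X : Polynomial (ZMod p)) ^ m' - 1) ^ p ^ a := by
    rw [frob_aux p hp m' a, Nat.mul_comm m', hfact]
  have hf1 : f ∣ (X : Polynomial (ZMod p)) ^ m' - 1 := by
    have : f ∣ (X : Polynomial (ZMod p)) ^ m - 1 := (dvd_pow_self f hh.ne').trans hmdvd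
    rw [hrw] at this
    exact hprime.dvd_of_dvd_pow this
  have hediv : e ∣ m' := ord_dvd_aux p f e hord m' hm'0 hf1
  -- squarefreeness: multiplicity of f in X^m' - 1 is exactly 1
  have hsq : Squarefree ((X : Polynomial (ZMod p)) ^ m' - 1) := by
    have hn0 : ((m' : ℕ) : ZMod p) ≠ 0 := by
      rwa [Ne, ZMod.natCast_eq_zero_iff]
    have := separable_X_pow_sub_C (1 : ZMod p) hn0 one_ne_zero
    rw [map_one] at this
    exact this.squarefree
  -- h ≤ p^a
  obtain ⟨g, hg⟩ := hf1
  have hfg : ¬ f ∣ g := by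
    intro hcon
    obtain ⟨g', rfl⟩ := hcon
    exact hirr.not_isUnit (hsq f (by rw [hg]; ring_nf; exact Dvd.intro g' (by ring)))
  have hha : h ≤ p ^ a := by
    by_contra hcon
    push_neg at hcon
    have h1 : f ^ (p ^ a + 1) ∣ ((X : Polynomial (ZMod p)) ^ m' - 1) ^ p ^ a :=
      (pow_dvd_pow f hcon).trans (hrw ▸ hmdvd)
    rw [hg, mul_pow, pow_succ] at h1
    have h2 : f ^ p ^ a * f ∣ f ^ p ^ a * g ^ p ^ a := by rwa [mul_comm (f ^ p ^ a) f] at h1 ⊢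
    have h3 : f ∣ g ^ p ^ a := (mul_dvd_mul_iff_left (pow_ne_zero _ hfne)).mp h2
    exact hfg (hprime.dvd_of_dvd_pow h3)
  have hta : t ≤ a := ht.2 hha
  calc e * p ^ t ≤ m' * p ^ a :=
        Nat.mul_le_mul (Nat.le_of_dvd hm'0 hediv) (Nat.pow_le_pow_right hp.pos hta)
    _ = m := by rw [Nat.mul_comm]; exact hfact
end

section
/- Let σ be an invertible linear map on the n-dimensional vector space V over F_p whose minimal polynomial f equals its characteristic polynomial, with factorization f = ∏_{i} p_i^{k_i} into powers of distinct monic irreducible polynomials p_i. Then the order of σ as a group element equals ord(f) = lcm over i of u_i·p^{t_i}, where u_i = ord(p_i) and t_i is the least integer with p^{t_i} ≥ k_i. -/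
/-!
`σ ^ m = 1` exactly when the minimal polynomial `f` divides `X ^ m - 1`, and since the
`P i ^ k i` are pairwise coprime this happens exactly when every `P i ^ k i` does. In
characteristic `p`, write `m = p ^ a * m'` with `p ∤ m'`: then `X ^ m - 1 = (X ^ m' - 1) ^ p ^ a`
with `X ^ m' - 1` squarefree, so `P ^ k ∣ X ^ m - 1` forces `P ∣ X ^ m' - 1` and `k ≤ p ^ a`.
Hence `P ^ k ∣ X ^ m - 1 ↔ ord(P) * p ^ t ∣ m`, and `ord(P)` is prime to `p`.
-/

open Polynomial

theorem isLeast_iff_orderOf_eq {G : Type*} [Monoid G] {x : G} {u : ℕ} :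
    IsLeast {m : ℕ | 0 < m ∧ x ^ m = 1} u ↔ 0 < u ∧ orderOf x = u := by
  constructor
  · rintro ⟨⟨hu0, hxu⟩, hleast⟩
    refine ⟨hu0, (orderOf_eq_iff hu0).2 ⟨hxu, fun m hmu hm0 hxm => ?_⟩⟩
    exact absurd (hleast ⟨hm0, hxm⟩) (not_le.2 hmu)
  · rintro ⟨hu0, rfl⟩
    exact ⟨⟨hu0, pow_orderOf_eq_one x⟩, fun m ⟨hm0, hxm⟩ => orderOf_le_of_pow_eq_one hm0 hxm⟩

theorem Fintype.prod_dvd_iff_of_coprime {R ι : Type*} [CommSemiring R] [Fintype ι]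
    {s : ι → R} {z : R} (hs : Pairwise fun i j => IsCoprime (s i) (s j)) : ∏ i, s i ∣ z ↔ ∀ i, s i ∣ z :=
  ⟨fun h i => (Finset.dvd_prod_of_mem s (Finset.mem_univ i)).trans h,
    Fintype.prod_dvd_of_coprime hs⟩

theorem le_of_pow_dvd_pow_of_squarefree {R : Type*} [CommMonoidWithZero R] [IsCancelMulZero R] {P Q : R}
    (hP : Prime P) (hQ : Squarefree Q) {k N : ℕ} (h : P ^ k ∣ Q ^ N) : k ≤ N := by
  have hPQ : emultiplicity P Q ≤ 1 :=
    ((squarefree_iff_emultiplicity_le_one Q).1 hQ P).resolve_right hP.not_isUnit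
  have hk := pow_dvd_iff_le_emultiplicity.1 h
  rw [emultiplicity_pow hP] at hk
  exact_mod_cast hk.trans ((mul_le_mul_of_nonneg_left hPQ zero_le).trans_eq (mul_one _))

theorem Units.pow_eq_one_iff_minpoly_dvd {K A : Type*} [Field K] [Ring A] [Algebra K A]
    (σ : Aˣ) (m : ℕ) : σ ^ m = 1 ↔ minpoly K (σ : A) ∣ X ^ m - 1 := by
  rw [minpoly.dvd_iff, map_sub, map_pow, aeval_X, map_one, sub_eq_zero, ← Units.val_pow_eq_pow_val,
    Units.val_eq_one]

namespace Polynomial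

theorem Monic.isCoprime_of_irreducible {K : Type*} [Field K] {P Q : K[X]} (hPm : P.Monic)
    (hQm : Q.Monic) (hP : Irreducible P) (hQ : Irreducible Q) (hne : P ≠ Q) : IsCoprime P Q := by
  rw [hP.coprime_iff_not_dvd]
  exact fun hd => hne (eq_of_monic_of_associated hPm hQm (hP.associated_of_dvd hQ hd))

theorem root_pow_eq_one_iff_dvd {R : Type*} [CommRing R] (P : R[X]) (m : ℕ) :
    AdjoinRoot.root P ^ m = 1 ↔ P ∣ X ^ m - 1 := by
  rw [← AdjoinRoot.mk_eq_zero, map_sub, map_pow, AdjoinRoot.mk_X, map_one, sub_eq_zero]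

theorem dvd_X_pow_sub_one_iff_dvd {R : Type*} [CommRing R] {P : R[X]} {u : ℕ}
    (hu : IsLeast {m : ℕ | 0 < m ∧ P ∣ X ^ m - 1} u) (m : ℕ) : P ∣ X ^ m - 1 ↔ u ∣ m := by
  simp_rw [← root_pow_eq_one_iff_dvd] at hu ⊢
  rw [← (isLeast_iff_orderOf_eq.1 hu).2, orderOf_dvd_iff_pow_eq_one]

section CharP

variable {K : Type*} [Field K] (p : ℕ) [Fact p.Prime] [CharP K p]

theorem X_pow_prime_pow_mul_sub_one (a m : ℕ) :
    (X : K[X]) ^ (p ^ a * m) - 1 = (X ^ m - 1) ^ p ^ a := by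
  rw [sub_pow_char_pow, one_pow, ← pow_mul, mul_comm]

variable {p}

theorem not_dvd_of_isLeast_dvd_X_pow_sub_one {P : K[X]} (hP : Irreducible P) {u : ℕ}
    (hu : IsLeast {m : ℕ | 0 < m ∧ P ∣ X ^ m - 1} u) : ¬ p ∣ u := by
  rintro ⟨v, rfl⟩
  have hv : 0 < v := Nat.pos_of_mul_pos_left hu.1.1
  have hPv : P ∣ X ^ v - 1 := by
    refine hP.prime.dvd_of_dvd_pow (n := p ^ 1) ?_
    rw [← X_pow_prime_pow_mul_sub_one, pow_one]
    exact hu.1.2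
  have := hu.2 ⟨hv, hPv⟩
  nlinarith [(Fact.out : p.Prime).two_le]

theorem pow_dvd_X_pow_sub_one_iff {P : K[X]} (hP : Irreducible P) {k u t : ℕ} (hk : 0 < k)
    (hu : IsLeast {m : ℕ | 0 < m ∧ P ∣ X ^ m - 1} u) (ht : IsLeast {m : ℕ | k ≤ p ^ m} t)
    (m : ℕ) : P ^ k ∣ X ^ m - 1 ↔ u * p ^ t ∣ m := by
  have hp : p.Prime := Fact.out
  constructor
  · intro h
    rcases eq_or_ne m 0 with rfl | hm0
    · exact dvd_zero _
    have hum : u ∣ m := (dvd_X_pow_sub_one_iff_dvd hu m).1 ((dvd_pow_self P hk.ne').trans h)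
    have hsqf : Squarefree ((X : K[X]) ^ (m / p ^ m.factorization p) - 1) := by
      simpa using (separable_X_pow_sub_C' p _ (1 : K) (Nat.not_dvd_ordCompl hp hm0)
        one_ne_zero).squarefree
    have hka : k ≤ p ^ m.factorization p := by
      refine le_of_pow_dvd_pow_of_squarefree hP.prime hsqf ?_
      rwa [← X_pow_prime_pow_mul_sub_one, Nat.ordProj_mul_ordCompl_eq_self]
    have hptm : p ^ t ∣ m := (pow_dvd_pow p (ht.2 hka)).trans (Nat.ordProj_dvd m p)
    have hcop : u.Coprime (p ^ t) :=
      ((hp.coprime_iff_not_dvd.2 (not_dvd_of_isLeast_dvd_X_pow_sub_one hP hu)).pow_left t).symm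
    exact hcop.mul_dvd_of_dvd_of_dvd hum hptm
  · intro h
    calc P ^ k ∣ P ^ p ^ t := pow_dvd_pow P ht.1
      _ ∣ (X ^ u - 1) ^ p ^ t := pow_dvd_pow_of_dvd hu.1.2 _
      _ = X ^ (p ^ t * u) - 1 := (X_pow_prime_pow_mul_sub_one p t u).symm
      _ ∣ X ^ m - 1 := by
        obtain ⟨c, rfl⟩ := h
        rw [mul_comm u]
        exact pow_one_sub_dvd_pow_mul_sub_one (X : K[X]) _ _

end CharP

end Polynomial

theorem stmt_3_general (p n : ℕ) [Fact p.Prime]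
    (σ : GL (Fin n) (ZMod p))
    (f : Polynomial (ZMod p))
    (hf : f = minpoly (ZMod p) (σ : Matrix (Fin n) (Fin n) (ZMod p)))
    (s : ℕ) (P : Fin s → Polynomial (ZMod p)) (k : Fin s → ℕ)
    (hP : ∀ i, (P i).Monic ∧ Irreducible (P i)) (hk : ∀ i, 0 < k i)
    (hdist : Function.Injective P)
    (hfact : f = ∏ i, P i ^ k i)
    (u t : Fin s → ℕ)
    (hu : ∀ i, IsLeast {m : ℕ | 0 < m ∧ P i ∣ X ^ m - 1} (u i))
    (ht : ∀ i, IsLeast {m : ℕ | k i ≤ p ^ m} (t i)) :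
    orderOf σ = Finset.univ.lcm (fun i : Fin s => u i * p ^ t i) ∧
      IsLeast {m : ℕ | 0 < m ∧ f ∣ X ^ m - 1} (orderOf σ) := by
  have hσf : ∀ m, σ ^ m = 1 ↔ f ∣ X ^ m - 1 := fun m => by
    rw [hf, Units.pow_eq_one_iff_minpoly_dvd (K := ZMod p)]
  have hσ : ∀ m, σ ^ m = 1 ↔ ∀ i, u i * p ^ t i ∣ m := fun m => by
    rw [hσf, hfact, Fintype.prod_dvd_iff_of_coprime]
    · exact forall_congr' fun i => pow_dvd_X_pow_sub_one_iff (hP i).2 (hk i) (hu i) (ht i) m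
    · exact fun i j hij =>
        ((hP i).1.isCoprime_of_irreducible (hP j).1 (hP i).2 (hP j).2 (hdist.ne hij)).pow
  refine ⟨Nat.dvd_right_iff_eq.1 fun m => ?_, ?_⟩
  · rw [orderOf_dvd_iff_pow_eq_one, hσ, Finset.lcm_dvd_iff]
    simp
  · simp_rw [← hσf]
    exact isLeast_iff_orderOf_eq.2 ⟨orderOf_pos σ, rfl⟩

/-- Let `σ ∈ GL(n,p)` whose minimal polynomial `f` equals its characteristic polynomial,
with factorization `f = ∏ i, (P i)^(k i)` into powers of distinct monic irreducibles.
Then the order of `σ` equals `ord(f) = lcm_i (u i * p^(t i))`, where `u i = ord(P i)` and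
`t i` is the least integer with `p^(t i) ≥ k i`. -/
theorem stmt_3 (p n : ℕ) (hp : p.Prime) [Fact p.Prime]
    (σ : GL (Fin n) (ZMod p))
    (f : Polynomial (ZMod p))
    (hf : f = minpoly (ZMod p) (σ : Matrix (Fin n) (Fin n) (ZMod p)))
    (hchar : f = Matrix.charpoly (σ : Matrix (Fin n) (Fin n) (ZMod p)))
    (s : ℕ) (P : Fin s → Polynomial (ZMod p)) (k : Fin s → ℕ)
    (hP : ∀ i, (P i).Monic ∧ Irreducible (P i)) (hk : ∀ i, 0 < k i)
    (hdist : Function.Injective P)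
    (hfact : f = ∏ i, P i ^ k i)
    (u t : Fin s → ℕ)
    (hu : ∀ i, IsLeast {m : ℕ | 0 < m ∧ P i ∣ X ^ m - 1} (u i))
    (ht : ∀ i, IsLeast {m : ℕ | k i ≤ p ^ m} (t i)) :
    orderOf σ = Finset.univ.lcm (fun i : Fin s => u i * p ^ t i) ∧
      IsLeast {m : ℕ | 0 < m ∧ f ∣ X ^ m - 1} (orderOf σ) :=
  stmt_3_general p n σ f hf s P k hP hk hdist hfact u t hu ht
end

section
/- Let p be an odd prime and σ ∈ GL(n,p) with minimal polynomial f = ∏_{i=0}^{s-1} p_i^{k_i} equal to its characteristic polynomial (the p_i distinct monic irreducibles), and suppose p divides the order of σ. Let t_i be minimal with p^{t_i} ≥ k_i. Then the subgroup generated by σ^{o(σ)/p} fixes pointwise an (n-1)-dimensional subspace if and only if there exists an index i such that p_i is linear (p_i(x) = x - α_i), t_i > t_j for all j ≠ i, and k_i = p^{t_i - 1} + 1. -/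
/-!
Since the minimal polynomial `f` of `σ` is its characteristic polynomial, `ker (g σ)` has
dimension `deg g` for every divisor `g` of `f`, and the fixed space of `σ ^ m` is `ker (g σ)` for
`g = gcd (X ^ m - 1, f)`. Write `o(σ) = c p ^ E` with `p ∤ c`. Every `P i` divides the separable
polynomial `X ^ c - 1`, so it divides `X ^ (c p ^ e) - 1 = (X ^ c - 1) ^ p ^ e` exactly `p ^ e`
times. Hence `k i ≤ p ^ E` for all `i`, with `k i > p ^ (E - 1)` for some `i` (that is,
`E = max t`), and for `m = o(σ) / p = c p ^ (E - 1)` we get `g = ∏ P i ^ min (k i) (p ^ (E - 1))`.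
The fixed space is therefore a hyperplane iff `∑ (k i - p ^ (E - 1)) deg (P i) = 1`, i.e. iff a
single linear factor with `t i = E` has multiplicity `p ^ (E - 1) + 1`.
-/

open Polynomial Function Module LinearMap

lemma Finset.dvd_prod_of_dvd_prod_of_dvd {ι α : Type*} [CommMonoidWithZero α]
    [DecompositionMonoid α] {s : Finset ι} {f g : ι → α} {a : α}
    (h : ∀ i ∈ s, ∀ d, d ∣ f i → d ∣ a → d ∣ g i) {d : α} (hdf : d ∣ ∏ i ∈ s, f i)
    (hda : d ∣ a) : d ∣ ∏ i ∈ s, g i := by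
  induction s using Finset.cons_induction generalizing d with
  | empty => simpa using hdf
  | cons i s _ ih =>
    rw [Finset.prod_cons] at hdf ⊢
    obtain ⟨d₁, d₂, hd₁, hd₂, rfl⟩ := exists_dvd_and_dvd_of_dvd_mul hdf
    exact mul_dvd_mul (h i (mem_cons_self i s) d₁ hd₁ ((dvd_mul_right d₁ d₂).trans hda))
      (ih (fun j hj => h j (mem_cons_of_mem hj)) hd₂ ((dvd_mul_left d₂ d₁).trans hda))

lemma dvd_pow_min_of_dvd_pow_of_dvd {α : Type*} [CommMonoidWithZero α] [IsCancelMulZero α]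
    {Q a d : α} (hQ : Prime Q) {k e : ℕ} (ha : ∀ j, Q ^ j ∣ a → j ≤ e) (hdk : d ∣ Q ^ k)
    (hda : d ∣ a) : d ∣ Q ^ min k e := by
  obtain ⟨c, hck, hdc⟩ := (dvd_prime_pow hQ k).1 hdk
  have hce : c ≤ e := ha c (hdc.symm.dvd.trans hda)
  exact hdc.dvd.trans (pow_dvd_pow Q (le_min hck hce))

lemma Polynomial.natDegree_prod_pow {R ι : Type*} [CommSemiring R] [NoZeroDivisors R]
    [Fintype ι] {P : ι → R[X]} (hP : ∀ i, P i ≠ 0) (j : ι → ℕ) :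
    (∏ i, P i ^ j i).natDegree = ∑ i, j i * (P i).natDegree := by
  rw [natDegree_prod _ _ fun i _ => pow_ne_zero _ (hP i)]
  simp only [natDegree_pow]

lemma Polynomial.Monic.natDegree_eq_one_iff_exists_eq_X_sub_C {R : Type*} [CommRing R]
    [Nontrivial R] {P : R[X]} (hP : P.Monic) : P.natDegree = 1 ↔ ∃ α, P = X - C α := by
  refine ⟨fun h => ⟨-P.coeff 0, ?_⟩, fun ⟨α, hα⟩ => hα ▸ natDegree_X_sub_C α⟩
  rw [map_neg, sub_neg_eq_add]
  exact hP.eq_X_add_C h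

lemma Polynomial.pairwise_isCoprime_of_monic_of_irreducible {K ι : Type*} [Field K]
    {P : ι → K[X]} (hP : ∀ i, (P i).Monic ∧ Irreducible (P i)) (hinj : Injective P) :
    Pairwise (IsCoprime on P) := fun i j hij =>
  (hP i).2.coprime_iff_not_dvd.2 fun hdvd => hij <| hinj <|
    eq_of_monic_of_associated (hP i).1 (hP j).1 ((hP i).2.associated_of_dvd (hP j).2 hdvd)

lemma Nat.div_eq_ordCompl_mul_pow_pred {o q : ℕ} (hq : q.Prime) (ho : o ≠ 0) (hqo : q ∣ o) :
    o / q = ordCompl[q] o * q ^ (o.factorization q - 1) := by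
  apply Nat.div_eq_of_eq_mul_left hq.pos
  rw [mul_assoc, pow_sub_one_mul (hq.factorization_pos_of_dvd ho hqo).ne', mul_comm]
  exact (Nat.ordProj_mul_ordCompl_eq_self o q).symm

lemma Nat.not_dvd_div_of_prime_dvd {o q : ℕ} (hq : q.Prime) (ho : o ≠ 0) (hqo : q ∣ o) :
    ¬ o ∣ o / q := fun h =>
  (Nat.div_lt_self (Nat.pos_of_ne_zero ho) hq.one_lt).not_ge <|
    Nat.le_of_dvd (Nat.div_pos (Nat.le_of_dvd (Nat.pos_of_ne_zero ho) hqo) hq.pos) h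

lemma pow_dvd_X_pow_ordCompl_mul_sub_one {R ι : Type*} [CommRing R] [Fintype ι] {P : ι → R[X]}
    {k : ι → ℕ} {o : ℕ} (p : ℕ) (hord : ∀ N, o ∣ N ↔ ∏ i, P i ^ k i ∣ X ^ N - 1) (i : ι) :
    P i ^ k i ∣ X ^ (ordCompl[p] o * p ^ o.factorization p) - 1 := by
  rw [mul_comm (ordCompl[p] o), Nat.ordProj_mul_ordCompl_eq_self]
  exact (Finset.dvd_prod_of_mem (fun j => P j ^ k j) (Finset.mem_univ i)).trans
    ((hord o).1 dvd_rfl)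

section CharP

variable {K : Type*} [Field K] {p : ℕ} [Fact p.Prime] [CharP K p]

lemma X_pow_mul_pow_sub_one (N e : ℕ) :
    (X ^ (N * p ^ e) - 1 : K[X]) = (X ^ N - 1) ^ p ^ e := by
  rw [sub_pow_char_pow, one_pow, ← pow_mul]

lemma pow_dvd_X_pow_mul_pow_sub_one {Q : K[X]} {N j e : ℕ} (hQ : Q ∣ X ^ N - 1)
    (hj : j ≤ p ^ e) : Q ^ j ∣ X ^ (N * p ^ e) - 1 := by
  rw [X_pow_mul_pow_sub_one]
  exact (pow_dvd_pow Q hj).trans (pow_dvd_pow_of_dvd hQ _)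

lemma dvd_X_pow_sub_one_of_pow_dvd {Q : K[X]} (hQ : Prime Q) {N j e : ℕ} (hj : j ≠ 0)
    (h : Q ^ j ∣ X ^ (N * p ^ e) - 1) : Q ∣ X ^ N - 1 := by
  rw [X_pow_mul_pow_sub_one] at h
  exact hQ.dvd_of_dvd_pow ((dvd_pow_self Q hj).trans h)

/-- `X ^ N - 1` is separable for `p ∤ N`, so a prime occurs in `(X ^ N - 1) ^ p ^ e` at most
`p ^ e` times. -/
lemma le_of_pow_dvd_X_pow_mul_pow_sub_one {Q : K[X]} (hQ : Prime Q) {N j e : ℕ} (hN : ¬ p ∣ N)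
    (h : Q ^ j ∣ X ^ (N * p ^ e) - 1) : j ≤ p ^ e := by
  have hsq : Squarefree (X ^ N - 1 : K[X]) := by
    simpa using (separable_X_pow_sub_C' p N (1 : K) hN one_ne_zero).squarefree
  have hmult : emultiplicity Q (X ^ N - 1) ≤ 1 :=
    ((squarefree_iff_emultiplicity_le_one _).1 hsq Q).resolve_right hQ.not_isUnit
  rw [X_pow_mul_pow_sub_one, pow_dvd_iff_le_emultiplicity, emultiplicity_pow hQ] at h
  have : ((p ^ e : ℕ) : ℕ∞) * emultiplicity Q (X ^ N - 1) ≤ (p ^ e : ℕ) * 1 := by gcongr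
  exact_mod_cast h.trans (this.trans_eq (mul_one _))

variable {ι : Type*} [Fintype ι] {P : ι → K[X]} {k : ι → ℕ} {o : ℕ}

lemma prod_pow_dvd_X_pow_mul_pow_sub_one (hcop : Pairwise (IsCoprime on P)) {N e : ℕ}
    (hdvd : ∀ i, P i ∣ X ^ N - 1) {j : ι → ℕ} (hj : ∀ i, j i ≤ p ^ e) :
    ∏ i, P i ^ j i ∣ X ^ (N * p ^ e) - 1 :=
  Finset.prod_dvd_of_coprime (fun _ _ _ _ hne => (hcop hne).pow) fun i _ =>
    pow_dvd_X_pow_mul_pow_sub_one (hdvd i) (hj i)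

lemma dvd_prod_pow_min_of_dvd (hP : ∀ i, Prime (P i)) {N e : ℕ} (hN : ¬ p ∣ N) (k : ι → ℕ)
    {d : K[X]} (hdX : d ∣ X ^ (N * p ^ e) - 1) (hdf : d ∣ ∏ i, P i ^ k i) :
    d ∣ ∏ i, P i ^ min (k i) (p ^ e) :=
  Finset.dvd_prod_of_dvd_prod_of_dvd (fun i _ _ h₁ h₂ => dvd_pow_min_of_dvd_pow_of_dvd (hP i)
    (fun _ hj => le_of_pow_dvd_X_pow_mul_pow_sub_one (hP i) hN hj) h₁ h₂) hdf hdX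

lemma dvd_X_pow_ordCompl_sub_one (hP : ∀ i, Prime (P i)) (hk : ∀ i, k i ≠ 0)
    (hord : ∀ N, o ∣ N ↔ ∏ i, P i ^ k i ∣ X ^ N - 1) (i : ι) : P i ∣ X ^ ordCompl[p] o - 1 :=
  dvd_X_pow_sub_one_of_pow_dvd (hP i) (hk i) (pow_dvd_X_pow_ordCompl_mul_sub_one p hord i)

lemma le_pow_factorization (hP : ∀ i, Prime (P i)) (ho : o ≠ 0)
    (hord : ∀ N, o ∣ N ↔ ∏ i, P i ^ k i ∣ X ^ N - 1) (i : ι) : k i ≤ p ^ o.factorization p :=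
  le_of_pow_dvd_X_pow_mul_pow_sub_one (hP i) (Nat.not_dvd_ordCompl Fact.out ho)
    (pow_dvd_X_pow_ordCompl_mul_sub_one p hord i)

/-- Otherwise `∏ i, P i ^ k i` would divide `X ^ (o / p) - 1`. -/
lemma exists_pow_pred_factorization_lt (hP : ∀ i, Prime (P i))
    (hcop : Pairwise (IsCoprime on P)) (hk : ∀ i, k i ≠ 0) (ho : o ≠ 0) (hpo : p ∣ o)
    (hord : ∀ N, o ∣ N ↔ ∏ i, P i ^ k i ∣ X ^ N - 1) :
    ∃ i, p ^ (o.factorization p - 1) < k i := by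
  by_contra! hle
  apply Nat.not_dvd_div_of_prime_dvd Fact.out ho hpo
  rw [hord, Nat.div_eq_ordCompl_mul_pow_pred Fact.out ho hpo]
  exact prod_pow_dvd_X_pow_mul_pow_sub_one hcop (dvd_X_pow_ordCompl_sub_one hP hk hord) hle

end CharP

lemma aeval_comp_eq_comp_aeval {R M N : Type*} [CommRing R] [AddCommGroup M] [Module R M]
    [AddCommGroup N] [Module R N] {A : Module.End R M} {B : Module.End R N} {L : M →ₗ[R] N}
    (h : B ∘ₗ L = L ∘ₗ A) (q : R[X]) : aeval B q ∘ₗ L = L ∘ₗ aeval A q := by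
  induction q using Polynomial.induction_on' with
  | add a b ha hb => rw [map_add, map_add, LinearMap.add_comp, comp_add, ha, hb]
  | monomial m a =>
    ext v
    have hpow := LinearMap.congr_fun (Module.End.commute_pow_left_of_commute h m) v
    simp only [LinearMap.comp_apply] at hpow
    simp only [aeval_monomial, LinearMap.comp_apply, Module.End.mul_apply,
      Module.algebraMap_end_apply, map_smul, hpow]

lemma ker_aeval_mono {R M : Type*} [CommRing R] [AddCommGroup M] [Module R M]
    {φ : Module.End R M} {a b : R[X]} (h : a ∣ b) : ker (aeval φ a) ≤ ker (aeval φ b) := by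
  obtain ⟨c, rfl⟩ := h
  rw [mul_comm, map_mul]
  exact ker_le_ker_comp _ _

lemma apply_mem_ker_aeval {R M : Type*} [CommRing R] [AddCommGroup M] [Module R M]
    {φ : Module.End R M} {q : R[X]} {v : M} (hv : v ∈ ker (aeval φ q)) :
    φ v ∈ ker (aeval φ q) := by
  have := LinearMap.congr_fun (aeval_comp_eq_comp_aeval (A := φ) (L := φ) rfl q) v
  rw [mem_ker] at hv ⊢
  rw [← LinearMap.comp_apply, this, LinearMap.comp_apply, hv, map_zero]

lemma orderOf_dvd_iff_minpoly_dvd {K A : Type*} [Field K] [Ring A] [Algebra K A] (x : A)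
    (N : ℕ) : orderOf x ∣ N ↔ minpoly K x ∣ X ^ N - 1 := by
  rw [orderOf_dvd_iff_pow_eq_one, minpoly.dvd_iff, map_sub, map_pow, aeval_X, map_one,
    sub_eq_zero]

section Cyclic

variable {K V : Type*} [Field K] [AddCommGroup V] [Module K V] {φ : Module.End K V}

lemma ker_aeval_eq_of_forall_dvd {f q g : K[X]} (hf : aeval φ f = 0) (hgq : g ∣ q)
    (hg : ∀ d, d ∣ q → d ∣ f → d ∣ g) : ker (aeval φ q) = ker (aeval φ g) := by
  classical
  refine le_antisymm ?_ (ker_aeval_mono hgq)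
  refine le_trans ?_ (ker_aeval_mono (hg _ (EuclideanDomain.gcd_dvd_left q f)
    (EuclideanDomain.gcd_dvd_right q f)))
  intro v hv
  rw [mem_ker] at hv ⊢
  rw [EuclideanDomain.gcd_eq_gcd_ab q f, mul_comm q, mul_comm f, map_add, map_mul, map_mul,
    LinearMap.add_apply, Module.End.mul_apply, Module.End.mul_apply, hv, hf]
  simp

variable [FiniteDimensional K V]

/-- The minimal polynomial of `φ` divides that of `φ` on `ker (q φ)` times the characteristic
polynomial of `φ` on the quotient; compare degrees. -/
lemma finrank_ker_aeval_le_natDegree (hmc : minpoly K φ = φ.charpoly) {q : K[X]} (hq : q ≠ 0) :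
    finrank K (ker (aeval φ q)) ≤ q.natDegree := by
  set U := ker (aeval φ q)
  have hU : ∀ v ∈ U, φ v ∈ U := fun _ => apply_mem_ker_aeval
  set φU := φ.restrict hU
  set φQ := U.mapQ U φ hU
  have hφU : aeval φU q = 0 := by
    ext u
    have := LinearMap.congr_fun (aeval_comp_eq_comp_aeval (A := φU) (B := φ) (L := U.subtype)
      rfl q) u
    simpa [φU, U] using this.symm
  have hφQ : ∀ v, aeval φ φQ.charpoly v ∈ U := fun v => by
    have := LinearMap.congr_fun (aeval_comp_eq_comp_aeval (U.mapQ_mkQ U φ (h := hU))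
      φQ.charpoly) v
    rw [LinearMap.comp_apply, LinearMap.comp_apply, show U.mapQ U φ hU = φQ from rfl,
      aeval_self_charpoly, LinearMap.zero_apply] at this
    exact (Submodule.Quotient.mk_eq_zero U).1 this.symm
  have hann : aeval φ (minpoly K φU * φQ.charpoly) = 0 := by
    ext v
    have := LinearMap.congr_fun (aeval_comp_eq_comp_aeval (A := φU) (B := φ) (L := U.subtype)
      rfl (minpoly K φU)) ⟨_, hφQ v⟩
    simp only [LinearMap.comp_apply, minpoly.aeval] at this
    simpa [Module.End.mul_apply] using this
  have hmonU := minpoly.monic (LinearMap.isIntegral φU)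
  have hmonQ := LinearMap.charpoly_monic φQ
  have hdeg := natDegree_le_of_dvd (minpoly.dvd K φ hann) (hmonU.mul hmonQ).ne_zero
  rw [natDegree_mul hmonU.ne_zero hmonQ.ne_zero, hmc, charpoly_natDegree, charpoly_natDegree]
    at hdeg
  have hdegU := natDegree_le_of_dvd (minpoly.dvd K φU hφU) hq
  have := U.finrank_quotient_add_finrank
  omega

lemma finrank_ker_aeval_of_dvd_minpoly (hmc : minpoly K φ = φ.charpoly) {g : K[X]}
    (hg : g ∣ minpoly K φ) : finrank K (ker (aeval φ g)) = g.natDegree := by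
  obtain ⟨c, hc⟩ := hg
  have hf0 : minpoly K φ ≠ 0 := minpoly.ne_zero (LinearMap.isIntegral φ)
  have hg0 : g ≠ 0 := fun h => hf0 (by rw [hc, h, zero_mul])
  have hc0 : c ≠ 0 := fun h => hf0 (by rw [hc, h, mul_zero])
  have hrange : range (aeval φ c) ≤ ker (aeval φ g) := by
    rintro _ ⟨w, rfl⟩
    rw [mem_ker, ← Module.End.mul_apply, ← map_mul, ← hc, minpoly.aeval, LinearMap.zero_apply]
  have hdeg : g.natDegree + c.natDegree = finrank K V := by
    rw [← natDegree_mul hg0 hc0, ← hc, hmc, charpoly_natDegree]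
  have := Submodule.finrank_mono hrange
  have := finrank_range_add_finrank_ker (aeval φ c)
  have := finrank_ker_aeval_le_natDegree hmc hg0
  have := finrank_ker_aeval_le_natDegree hmc hc0
  omega

variable {p : ℕ} [Fact p.Prime] [CharP K p] {ι : Type*} [Fintype ι] {P : ι → K[X]}
  {k : ι → ℕ}

/-- With `o = c p ^ E`, `p ∤ c`, the polynomial `∏ i, P i ^ min (k i) (p ^ (E - 1))` is the gcd of
`X ^ (o / p) - 1` and the minimal polynomial. -/
lemma finrank_ker_aeval_X_pow_orderOf_div_sub_one (hmc : minpoly K φ = φ.charpoly)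
    (hP : ∀ i, Prime (P i)) (hcop : Pairwise (IsCoprime on P)) (hk : ∀ i, k i ≠ 0)
    (hfact : minpoly K φ = ∏ i, P i ^ k i) (ho : orderOf φ ≠ 0) (hpo : p ∣ orderOf φ) :
    finrank K (ker (aeval φ (X ^ (orderOf φ / p) - 1 : K[X]))) =
      ∑ i, min (k i) (p ^ ((orderOf φ).factorization p - 1)) * (P i).natDegree := by
  have hord : ∀ N, orderOf φ ∣ N ↔ ∏ i, P i ^ k i ∣ (X : K[X]) ^ N - 1 := fun N => by
    rw [orderOf_dvd_iff_minpoly_dvd (K := K), hfact]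
  set g := ∏ i, P i ^ min (k i) (p ^ ((orderOf φ).factorization p - 1))
  have hg : g ∣ minpoly K φ :=
    hfact ▸ Finset.prod_dvd_prod_of_dvd _ _ fun i _ => pow_dvd_pow _ (min_le_left _ _)
  have hker : ker (aeval φ (X ^ (ordCompl[p] (orderOf φ) *
      p ^ ((orderOf φ).factorization p - 1)) - 1 : K[X])) = ker (aeval φ g) :=
    ker_aeval_eq_of_forall_dvd (minpoly.aeval K φ)
      (prod_pow_dvd_X_pow_mul_pow_sub_one hcop (dvd_X_pow_ordCompl_sub_one hP hk hord)
        fun i => min_le_right _ _)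
      fun d hdX hdf => dvd_prod_pow_min_of_dvd hP (Nat.not_dvd_ordCompl Fact.out ho) k hdX
        (hfact ▸ hdf)
  rw [Nat.div_eq_ordCompl_mul_pow_pred Fact.out ho hpo, hker,
    finrank_ker_aeval_of_dvd_minpoly hmc hg, natDegree_prod_pow fun i => (hP i).ne_zero]

end Cyclic

namespace LinearEquiv

lemma orderOf_pos {R M : Type*} [Semiring R] [AddCommMonoid M] [Module R M] [Finite M]
    (e : M ≃ₗ[R] M) : 0 < orderOf e := by
  have : Finite (M ≃ₗ[R] M) := .of_injective _ DFunLike.coe_injective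
  exact _root_.orderOf_pos e

lemma orderOf_toLinearMap {R M : Type*} [Semiring R] [AddCommMonoid M] [Module R M]
    (e : M ≃ₗ[R] M) : orderOf (e : Module.End R M) = orderOf e :=
  orderOf_injective automorphismGroup.toLinearMapMonoidHom
    (fun _ _ h => toLinearMap_injective h) e

lemma mem_ker_aeval_X_pow_sub_one_iff {R M : Type*} [CommRing R] [AddCommGroup M]
    [Module R M] (e : M ≃ₗ[R] M) (N : ℕ) (w : M) :
    w ∈ ker (aeval (e : Module.End R M) (X ^ N - 1 : R[X])) ↔ (e ^ N) w = w := by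
  simp [sub_eq_zero, coe_pow, Module.End.pow_apply]

lemma exists_finrank_eq_pred_forall_pow_apply_eq_iff {K V : Type*} [Field K] [AddCommGroup V]
    [Module K V] [FiniteDimensional K V] (e : V ≃ₗ[K] V) {N : ℕ} (he : e ^ N ≠ 1) :
    (∃ W : Submodule K V, finrank K W = finrank K V - 1 ∧ ∀ w ∈ W, (e ^ N) w = w) ↔
      finrank K (ker (aeval (e : Module.End K V) (X ^ N - 1 : K[X]))) = finrank K V - 1 := by
  have hmem := e.mem_ker_aeval_X_pow_sub_one_iff N
  have hU : ker (aeval (e : Module.End K V) (X ^ N - 1 : K[X])) ≠ ⊤ := fun h =>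
    he <| LinearEquiv.ext fun w => (hmem w).1 (by rw [h]; exact Submodule.mem_top)
  refine ⟨fun ⟨W, hW, hWU⟩ => ?_, fun h => ⟨_, h, fun w => (hmem w).1⟩⟩
  have := Submodule.finrank_mono fun w hw => (hmem w).2 (hWU w hw)
  have := Submodule.finrank_lt hU
  omega

end LinearEquiv

lemma Nat.sum_eq_one_iff {ι : Type*} [Fintype ι] {c : ι → ℕ} :
    ∑ i, c i = 1 ↔ ∃ i, c i = 1 ∧ ∀ j ≠ i, c j = 0 := by
  classical
  refine ⟨fun h => ?_, fun ⟨i, hi, h0⟩ => ?_⟩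
  · obtain ⟨i, -, hi⟩ := Finset.exists_ne_zero_of_sum_ne_zero (h ▸ one_ne_zero)
    have hsplit := Finset.add_sum_erase Finset.univ c (Finset.mem_univ i)
    have hrest : ∑ j ∈ Finset.univ.erase i, c j = 0 := by omega
    refine ⟨i, by omega, fun j hj => ?_⟩
    exact Finset.sum_eq_zero_iff.1 hrest j (Finset.mem_erase.2 ⟨hj, Finset.mem_univ j⟩)
  · rw [Finset.sum_eq_single i (fun j _ hj => h0 j hj) (by simp), hi]

lemma pow_pred_lt_iff_le_of_isLeast {p k t E : ℕ} (hp : 0 < p)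
    (ht : IsLeast {m | k ≤ p ^ m} t) (hE : 1 ≤ E) : p ^ (E - 1) < k ↔ E ≤ t := by
  refine ⟨fun h => ?_, fun h => ?_⟩
  · by_contra! hlt
    exact h.not_ge (ht.1.trans (Nat.pow_le_pow_right hp (by omega)))
  · by_contra! hle
    have := ht.2 (show E - 1 ∈ {m | k ≤ p ^ m} from hle)
    omega

/-- The `k i` exceeding `p ^ (E - 1)` are those with `t i = E`; the weighted total excess is `1`
iff a single one exceeds it, by one, with weight one. -/
lemma sum_min_mul_eq_sum_mul_sub_one_iff {ι : Type*} [Fintype ι] {p E : ℕ} {k t d : ι → ℕ}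
    (hp : 0 < p) (hE : 1 ≤ E) (ht : ∀ i, IsLeast {m | k i ≤ p ^ m} (t i)) (hd : ∀ i, 0 < d i)
    (hle : ∀ i, k i ≤ p ^ E) (hex : ∃ i, p ^ (E - 1) < k i) :
    ∑ i, min (k i) (p ^ (E - 1)) * d i = ∑ i, k i * d i - 1 ↔
      ∃ i, d i = 1 ∧ (∀ j ≠ i, t j < t i) ∧ k i = p ^ (t i - 1) + 1 := by
  have htE : ∀ i, p ^ (E - 1) < k i ↔ t i = E := fun i =>
    (pow_pred_lt_iff_le_of_isLeast hp (ht i) hE).trans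
      ⟨fun h => le_antisymm ((ht i).2 (hle i)) h, ge_of_eq⟩
  have hsplit : ∑ i, k i * d i =
      ∑ i, min (k i) (p ^ (E - 1)) * d i + ∑ i, (k i - p ^ (E - 1)) * d i := by
    rw [← Finset.sum_add_distrib]
    exact Finset.sum_congr rfl fun i _ => by rw [← add_mul]; congr 1; omega
  have hpos : ∑ i, (k i - p ^ (E - 1)) * d i ≠ 0 := by
    obtain ⟨i, hi⟩ := hex
    rw [Ne, Finset.sum_eq_zero_iff, not_forall]
    exact ⟨i, fun h => by simp [(hd i).ne'] at h; omega⟩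
  rw [show (∑ i, min (k i) (p ^ (E - 1)) * d i = ∑ i, k i * d i - 1) ↔
    ∑ i, (k i - p ^ (E - 1)) * d i = 1 by omega, Nat.sum_eq_one_iff]
  simp only [mul_eq_one, mul_eq_zero, Nat.sub_eq_zero_iff_le]
  constructor
  · rintro ⟨i, ⟨hki, hdi⟩, hj⟩
    have hti : t i = E := (htE i).1 (by omega)
    refine ⟨i, hdi, fun j hji => ?_, by rw [hti]; omega⟩
    have hkj : ¬ p ^ (E - 1) < k j := by have := hd j; have := hj j hji; omega
    have := (ht j).2 (hle j)
    rw [htE j] at hkj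
    omega
  · rintro ⟨i, hdi, hlt, hki⟩
    have hti : t i = E := by
      obtain ⟨i₀, hi₀⟩ := hex
      rw [htE] at hi₀
      have := (ht i).2 (hle i)
      by_cases h : i₀ = i
      · exact h ▸ hi₀
      · have := hlt i₀ h
        omega
    refine ⟨i, ⟨by rw [hki, hti]; omega, hdi⟩, fun j hji => Or.inl ?_⟩
    have : ¬ p ^ (E - 1) < k j := fun h => by
      have := hlt j hji
      rw [(htE j).1 h] at this
      omega
    omega

theorem stmt_6_general (p n : ℕ) [Fact p.Prime]
    (σ : (Fin n → ZMod p) ≃ₗ[ZMod p] (Fin n → ZMod p))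
    (f : Polynomial (ZMod p))
    (hf : f = minpoly (ZMod p) σ.toLinearMap)
    (hchar : f = LinearMap.charpoly σ.toLinearMap)
    (s : ℕ) (P : Fin s → Polynomial (ZMod p)) (k : Fin s → ℕ)
    (hP : ∀ i, (P i).Monic ∧ Irreducible (P i)) (hk : ∀ i, 0 < k i)
    (hdist : Function.Injective P)
    (hfact : f = ∏ i, P i ^ k i)
    (t : Fin s → ℕ) (ht : ∀ i, IsLeast {m : ℕ | k i ≤ p ^ m} (t i))
    (hpe : p ∣ orderOf σ) :
    (∃ W : Submodule (ZMod p) (Fin n → ZMod p),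
        Module.finrank (ZMod p) W = n - 1 ∧
        ∀ w ∈ W, (σ ^ (orderOf σ / p)) w = w) ↔
      ∃ i : Fin s, (∃ α : ZMod p, P i = X - C α) ∧
        (∀ j : Fin s, j ≠ i → t j < t i) ∧ k i = p ^ (t i - 1) + 1 := by
  have hp : p.Prime := Fact.out
  have horder := σ.orderOf_toLinearMap
  have ho : orderOf σ ≠ 0 := σ.orderOf_pos.ne'
  have hPprime : ∀ i, Prime (P i) := fun i => (hP i).2.prime
  have hcop := pairwise_isCoprime_of_monic_of_irreducible hP hdist
  have hk' : ∀ i, k i ≠ 0 := fun i => (hk i).ne'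
  have hord : ∀ N, orderOf σ ∣ N ↔ ∏ i, P i ^ k i ∣ X ^ N - 1 := fun N => by
    rw [← horder, orderOf_dvd_iff_minpoly_dvd (K := ZMod p), ← hf, hfact]
  have hσ : σ ^ (orderOf σ / p) ≠ 1 := fun h =>
    Nat.not_dvd_div_of_prime_dvd hp ho hpe (orderOf_dvd_of_pow_eq_one h)
  have hdim := finrank_ker_aeval_X_pow_orderOf_div_sub_one (hf ▸ hchar) hPprime hcop hk'
    (hf ▸ hfact) (horder ▸ ho) (horder ▸ hpe)
  have hn : n - 1 = ∑ i, k i * (P i).natDegree - 1 := by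
    rw [← natDegree_prod_pow fun i => (hPprime i).ne_zero, ← hfact, hchar,
      LinearMap.charpoly_natDegree, Module.finrank_fin_fun]
  have hfin := σ.exists_finrank_eq_pred_forall_pow_apply_eq_iff hσ
  rw [Module.finrank_fin_fun, ← horder, hdim, horder, hn] at hfin
  rw [hn, hfin, sum_min_mul_eq_sum_mul_sub_one_iff hp.pos (hp.factorization_pos_of_dvd ho hpe) ht
    (fun i => (hP i).2.natDegree_pos) (le_pow_factorization hPprime ho hord)
    (exists_pow_pred_factorization_lt hPprime hcop hk' ho hpe hord)]
  exact exists_congr fun i => and_congr_left' (hP i).1.natDegree_eq_one_iff_exists_eq_X_sub_C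

/-- Let `p` be an odd prime, `σ ∈ GL(n,p)` with minimal polynomial
`f = ∏ i, (P i)^(k i)` (the `P i` distinct monic irreducibles) equal to its
characteristic polynomial, and suppose `p` divides the order of `σ`.  Let `t i` be
minimal with `p^(t i) ≥ k i`.  Then `⟨σ^(o(σ)/p)⟩` fixes pointwise an
`(n-1)`-dimensional subspace iff there is an index `i` with `P i` linear,
`t i > t j` for all `j ≠ i`, and `k i = p^(t i - 1) + 1`. -/
theorem stmt_6 (p n : ℕ) (hp : p.Prime) (hodd : p ≠ 2) [Fact p.Prime]
    (σ : (Fin n → ZMod p) ≃ₗ[ZMod p] (Fin n → ZMod p))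
    (f : Polynomial (ZMod p))
    (hf : f = minpoly (ZMod p) σ.toLinearMap)
    (hchar : f = LinearMap.charpoly σ.toLinearMap)
    (s : ℕ) (P : Fin s → Polynomial (ZMod p)) (k : Fin s → ℕ)
    (hP : ∀ i, (P i).Monic ∧ Irreducible (P i)) (hk : ∀ i, 0 < k i)
    (hdist : Function.Injective P)
    (hfact : f = ∏ i, P i ^ k i)
    (t : Fin s → ℕ) (ht : ∀ i, IsLeast {m : ℕ | k i ≤ p ^ m} (t i))
    (hpe : p ∣ orderOf σ) :
    (∃ W : Submodule (ZMod p) (Fin n → ZMod p),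
        Module.finrank (ZMod p) W = n - 1 ∧
        ∀ w ∈ W, (σ ^ (orderOf σ / p)) w = w) ↔
      ∃ i : Fin s, (∃ α : ZMod p, P i = X - C α) ∧
        (∀ j : Fin s, j ≠ i → t j < t i) ∧ k i = p ^ (t i - 1) + 1 :=
  stmt_6_general p n σ f hf hchar s P k hP hk hdist hfact t ht hpe
end

section
/- Let p be odd, X = T ⋊ ⟨σ⟩ ≤ AGL(n,p) with T the translation group and σ ∈ GL(n,p) of even order kp^m (p ∤ k, so (kp^m)/2 makes sense). Suppose X = ⟨σ, ℓ⟩ where ℓ is an involution of the form ℓ = t·σ^{kp^m/2} with t ∈ T nontrivial. Then the normal closure of ⟨t⟩ in X equals T, and σ^{kp^m/2} = -I. -/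
variable {K V : Type*} [Field K] [AddCommGroup V] [Module K V]

/-- The subgroup of affine automorphisms whose linear part is a power of `σ` and whose
translation part lies in a `σ`-invariant submodule `W`. -/
def auxH (σ : V ≃ₗ[K] V) (W : Submodule K V)
    (hW : ∀ j : ℤ, ∀ w ∈ W, (σ ^ j) w ∈ W) : Subgroup (V ≃ᵃ[K] V) where
  carrier := {f | f.linear ∈ Subgroup.zpowers σ ∧ f 0 ∈ W}
  one_mem' := ⟨one_mem _, by simpa using W.zero_mem⟩
  mul_mem' := by
    rintro a b ⟨⟨j, hj⟩, ha2⟩ ⟨hb1, hb2⟩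
    refine ⟨mul_mem ⟨j, hj⟩ hb1, ?_⟩
    have : (a * b) 0 = a.linear (b 0) +ᵥ a 0 := by
      have := a.map_vadd' (0 : V) (b 0)
      simpa [AffineEquiv.mul_def] using this
    rw [this]
    exact W.add_mem (hj ▸ hW j _ hb2) ha2
  inv_mem' := by
    rintro a ⟨⟨j, hj⟩, ha2⟩
    refine ⟨inv_mem ⟨j, hj⟩, ?_⟩
    have h1 : a (a⁻¹ 0) = 0 := by simp [AffineEquiv.inv_def]
    have h2 : a (a⁻¹ 0) = a.linear (a⁻¹ 0) +ᵥ a 0 := by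
      have := a.map_vadd' (0 : V) (a⁻¹ 0)
      simpa using this
    have h3 : a.linear (a⁻¹ 0) = -(a 0) := by
      rw [h1] at h2
      rw [vadd_eq_add] at h2
      exact eq_neg_of_add_eq_zero_left h2.symm
    have h4 : a⁻¹ 0 = a.linear.symm (-(a 0)) := by
      rw [← h3, LinearEquiv.symm_apply_apply]
    rw [h4, ← hj]
    have : (σ ^ j).symm = σ ^ (-j) := by
      rw [zpow_neg]; rfl
    rw [this]
    exact hW (-j) _ (W.neg_mem ha2)

/-- Let `p` be odd, `X = T ⋊ ⟨σ⟩ ≤ AGL(n,p)` with `T` the translation group and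
`σ ∈ GL(n,p)` of even order `k·p^m` with `p ∤ k`.  Suppose `X = ⟨σ, ℓ⟩` where `ℓ` is an
involution of the form `ℓ = t·σ^(k·p^m/2)` with `t ∈ T` nontrivial.  Then the normal
closure of `⟨t⟩` in `X` equals `T`, and `σ^(k·p^m/2) = -I`. -/
theorem stmt_8 (p n : ℕ) (hp : p.Prime) (hodd : p ≠ 2) [Fact p.Prime]
    (σ : (Fin n → ZMod p) ≃ₗ[ZMod p] (Fin n → ZMod p))
    (k m : ℕ) (hk : ¬ p ∣ k) (horder : orderOf σ = k * p ^ m)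
    (heven : Even (k * p ^ m))
    (t : Fin n → ZMod p) (ht : t ≠ 0)
    (τ : (Fin n → ZMod p) ≃ᵃ[ZMod p] (Fin n → ZMod p))
    (hτ : τ = AffineEquiv.constVAdd (ZMod p) (Fin n → ZMod p) t)
    (ℓ : (Fin n → ZMod p) ≃ᵃ[ZMod p] (Fin n → ZMod p))
    (hℓ : ℓ = τ * (σ ^ (k * p ^ m / 2)).toAffineEquiv)
    (hinv : ℓ * ℓ = 1)
    (T X : Subgroup ((Fin n → ZMod p) ≃ᵃ[ZMod p] (Fin n → ZMod p)))
    (hT : T = (AffineEquiv.constVAddHom (ZMod p) (Fin n → ZMod p)).range)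
    (hX : X = T ⊔ Subgroup.zpowers σ.toAffineEquiv)
    (hgen : Subgroup.closure {σ.toAffineEquiv, ℓ} = X) :
    Subgroup.closure {x | ∃ g ∈ X, x = g * τ * g⁻¹} = T ∧
      σ ^ (k * p ^ m / 2) = LinearEquiv.neg (ZMod p) := by
  -- the span of the σ-orbit of t
  let W : Submodule (ZMod p) (Fin n → ZMod p) :=
    Submodule.span (ZMod p) (Set.range fun j : ℤ => (σ ^ j) t)
  have hWinv : ∀ j : ℤ, ∀ w ∈ W, (σ ^ j) w ∈ W := by
    intro j w hw
    induction hw using Submodule.span_induction with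
    | mem x hx =>
      obtain ⟨i, rfl⟩ := hx
      refine Submodule.subset_span ⟨j + i, ?_⟩
      show (σ ^ (j + i)) t = (σ ^ j) ((σ ^ i) t)
      rw [zpow_add]
      rfl
    | zero => simpa using W.zero_mem
    | add x y _ _ hx hy => rw [map_add]; exact W.add_mem hx hy
    | smul c x _ hx => rw [map_smul]; exact W.smul_mem c hx
  -- conjugation by any affine map turns τ into a translation by (linear part of g) t
  have hconj : ∀ g : (Fin n → ZMod p) ≃ᵃ[ZMod p] (Fin n → ZMod p),
      g * τ * g⁻¹ = AffineEquiv.constVAdd (ZMod p) (Fin n → ZMod p) (g.linear t) := by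
    intro g
    refine AffineEquiv.ext fun x => ?_
    have h1 : (g * τ * g⁻¹) x = g (τ (g⁻¹ x)) := rfl
    rw [h1, hτ]
    have h2 : (AffineEquiv.constVAdd (ZMod p) (Fin n → ZMod p) t) (g⁻¹ x) = t +ᵥ g⁻¹ x := rfl
    rw [h2]
    have h3 : g (t +ᵥ g⁻¹ x) = g.linear t +ᵥ g (g⁻¹ x) := g.map_vadd' (g⁻¹ x) t
    rw [h3]
    have h4 : g (g⁻¹ x) = x := by simp [AffineEquiv.inv_def]
    rw [h4]
    rfl
  have hl0 : ℓ (0 : Fin n → ZMod p) = t := by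
    rw [hℓ]
    show τ ((σ ^ (k * p ^ m / 2)).toAffineEquiv 0) = t
    rw [hτ]
    show t +ᵥ (σ ^ (k * p ^ m / 2)) 0 = t
    simp
  -- ℓ² = 1 gives σ^N t = -t
  have hst : (σ ^ (k * p ^ m / 2)) t = -t := by
    have h0 : ℓ (ℓ 0) = (0 : Fin n → ZMod p) := by
      rw [show ℓ (ℓ 0) = (ℓ * ℓ) (0 : Fin n → ZMod p) from rfl, hinv]
      rfl
    rw [hl0] at h0
    have hlt : ℓ t = t + (σ ^ (k * p ^ m / 2)) t := by
      rw [hℓ]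
      show τ ((σ ^ (k * p ^ m / 2)).toAffineEquiv t) = t + (σ ^ (k * p ^ m / 2)) t
      rw [hτ]
      rfl
    rw [hlt] at h0
    exact eq_neg_of_add_eq_zero_right h0
  -- X is contained in auxH
  have hmemσ : σ.toAffineEquiv ∈ auxH σ W hWinv := by
    refine ⟨⟨(1 : ℤ), by show σ ^ (1 : ℤ) = σ.toAffineEquiv.linear; rw [zpow_one]; rfl⟩, ?_⟩
    show σ.toAffineEquiv 0 ∈ W
    have : σ.toAffineEquiv (0 : Fin n → ZMod p) = 0 := by
      show σ 0 = 0
      simp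
    rw [this]
    exact W.zero_mem
  have hmemℓ : ℓ ∈ auxH σ W hWinv := by
    constructor
    · show ℓ.linear ∈ Subgroup.zpowers σ
      rw [hℓ]
      have h5 : (τ * (σ ^ (k * p ^ m / 2)).toAffineEquiv).linear =
          τ.linear * σ ^ (k * p ^ m / 2) := rfl
      rw [h5, hτ]
      have h6 : (AffineEquiv.constVAdd (ZMod p) (Fin n → ZMod p) t).linear = 1 := rfl
      rw [h6, one_mul]
      exact ⟨((k * p ^ m / 2 : ℕ) : ℤ), by show σ ^ ((k * p ^ m / 2 : ℕ) : ℤ) = σ ^ (k * p ^ m / 2); rw [zpow_natCast]⟩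
    · show ℓ 0 ∈ W
      rw [hl0]
      exact Submodule.subset_span ⟨0, by simp⟩
  have hXH : X ≤ auxH σ W hWinv := by
    rw [← hgen]
    apply Subgroup.closure_le _ |>.2
    rintro x (rfl | rfl)
    · exact hmemσ
    · exact hmemℓ
  -- T ≤ X and hence W = ⊤
  have hTX : T ≤ X := by rw [hX]; exact le_sup_left
  have hWtop : W = ⊤ := by
    rw [eq_top_iff]
    intro v _
    have hv : AffineEquiv.constVAdd (ZMod p) (Fin n → ZMod p) v ∈ T := by
      rw [hT]; exact ⟨Multiplicative.ofAdd v, rfl⟩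
    have h7 := (hXH (hTX hv)).2
    simpa using h7
  -- second conclusion
  have hneg : σ ^ (k * p ^ m / 2) = LinearEquiv.neg (ZMod p) := by
    refine LinearEquiv.toLinearMap_injective (LinearMap.ext fun v => ?_)
    show (σ ^ (k * p ^ m / 2)) v = -v
    have hv : v ∈ W := hWtop ▸ Submodule.mem_top
    induction hv using Submodule.span_induction with
    | mem x hx =>
      obtain ⟨j, rfl⟩ := hx
      have hcomm : (σ ^ (k * p ^ m / 2)) ((σ ^ j) t) = (σ ^ j) ((σ ^ (k * p ^ m / 2)) t) := by
        have h8 : σ ^ ((k * p ^ m / 2 : ℕ) : ℤ) * σ ^ j = σ ^ j * σ ^ ((k * p ^ m / 2 : ℕ) : ℤ) := by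
          rw [← zpow_add, ← zpow_add, add_comm]
        have h9 := congrArg (fun f => f t) h8
        simp only [zpow_natCast] at h9
        exact h9
      rw [hcomm, hst, map_neg]
    | zero => simp
    | add x y _ _ hx hy => rw [map_add, hx, hy, neg_add]
    | smul c x _ hx => rw [map_smul, hx, smul_neg]
  refine ⟨le_antisymm ?_ ?_, hneg⟩
  · apply Subgroup.closure_le _ |>.2
    rintro x ⟨g, hg, rfl⟩
    rw [hconj g, hT]
    exact ⟨Multiplicative.ofAdd _, rfl⟩
  · intro x hx
    rw [hT] at hx
    obtain ⟨v, rfl⟩ := hx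
    show AffineEquiv.constVAdd (ZMod p) (Fin n → ZMod p) v.toAdd ∈ _
    generalize v.toAdd = w
    have hw : w ∈ W := hWtop ▸ Submodule.mem_top
    have hzX : Subgroup.zpowers σ.toAffineEquiv ≤ X := by rw [hX]; exact le_sup_right
    induction hw using Submodule.span_induction with
    | mem x hx =>
      obtain ⟨j, rfl⟩ := hx
      have hgX : σ.toAffineEquiv ^ j ∈ X :=
        hzX ((Subgroup.zpowers σ.toAffineEquiv).zpow_mem (Subgroup.mem_zpowers _) j)
      have hlin : (σ.toAffineEquiv ^ j).linear = σ ^ j := by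
        have h10 := map_zpow (AffineEquiv.linearHom (k := ZMod p) (P₁ := Fin n → ZMod p))
          σ.toAffineEquiv j
        have h10' : (σ.toAffineEquiv ^ j).linear = σ.toAffineEquiv.linear ^ j := by simpa using h10
        exact h10'.trans rfl
      have heq : σ.toAffineEquiv ^ j * τ * (σ.toAffineEquiv ^ j)⁻¹ =
          AffineEquiv.constVAdd (ZMod p) (Fin n → ZMod p) ((σ ^ j) t) := by
        rw [hconj, hlin]
      exact Subgroup.subset_closure ⟨_, hgX, heq.symm⟩
    | zero =>
      have h0 : AffineEquiv.constVAdd (ZMod p) (Fin n → ZMod p) 0 = 1 :=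
        AffineEquiv.ext fun x => by simp
      rw [h0]
      exact one_mem _
    | add a b _ _ ha hb =>
      have h11 : AffineEquiv.constVAdd (ZMod p) (Fin n → ZMod p) (a + b) =
          AffineEquiv.constVAdd (ZMod p) (Fin n → ZMod p) a *
            AffineEquiv.constVAdd (ZMod p) (Fin n → ZMod p) b := by
        rw [AffineEquiv.constVAdd_add]; rfl
      rw [h11]
      exact mul_mem ha hb
    | smul c x _ hx =>
      have hcv : c • x = c.val • x := by
        rw [← Nat.cast_smul_eq_nsmul (ZMod p), ZMod.natCast_val, ZMod.cast_id]
      rw [hcv, AffineEquiv.constVAdd_nsmul]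
      exact pow_mem hx _
end

section
/- Let X = T ⋊ ⟨σ⟩ ≤ AGL(n,2) with T the translation group, σ ∈ GL(n,2) of even order, and suppose X has trivial center. If ℓ = t·σ^{o(σ)/2} is an involution with t ∈ T, then X = ⟨σ, ℓ⟩ forces a contradiction; equivalently, if X = ⟨σ, ℓ⟩ with ℓ an involution and Z(X) = 1, then ℓ ∈ T. -/
/-- Let `X = T ⋊ ⟨σ⟩ ≤ AGL(n,2)` with `T` the translation group, `σ ∈ GL(n,2)` of even
order, and suppose `X` has trivial center.  If `X = ⟨σ, ℓ⟩` with `ℓ` an involution, then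
`ℓ ∈ T`. -/
theorem stmt_9 (n : ℕ)
    (σ : (Fin n → ZMod 2) ≃ₗ[ZMod 2] (Fin n → ZMod 2))
    (heven : Even (orderOf σ))
    (T X : Subgroup ((Fin n → ZMod 2) ≃ᵃ[ZMod 2] (Fin n → ZMod 2)))
    (hT : T = (AffineEquiv.constVAddHom (ZMod 2) (Fin n → ZMod 2)).range)
    (hX : X = T ⊔ Subgroup.zpowers σ.toAffineEquiv)
    (hcenter : Subgroup.center X = ⊥)
    (ℓ : (Fin n → ZMod 2) ≃ᵃ[ZMod 2] (Fin n → ZMod 2))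
    (hinv : ℓ * ℓ = 1)
    (hgen : Subgroup.closure {σ.toAffineEquiv, ℓ} = X) :
    ℓ ∈ T := by
  classical
  -- characteristic two
  have char2 : ∀ x : Fin n → ZMod 2, x + x = 0 := by
    intro x; funext i
    exact CharTwo.add_self_eq_zero (x i)
  have neg_self : ∀ x : Fin n → ZMod 2, -x = x := fun x =>
    neg_eq_of_add_eq_zero_left (char2 x)
  -- pointwise formula for affine equivalences
  have happly : ∀ (g : (Fin n → ZMod 2) ≃ᵃ[ZMod 2] (Fin n → ZMod 2))
      (x : Fin n → ZMod 2), g x = g.linear x + g 0 := by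
    intro g x
    have h := g.map_vadd (0 : Fin n → ZMod 2) x
    simpa [vadd_eq_add] using h
  -- the linear part of every element of the closure is a power of σ
  have hXlin : ∀ g ∈ Subgroup.closure
      ({σ.toAffineEquiv, ℓ} : Set ((Fin n → ZMod 2) ≃ᵃ[ZMod 2] (Fin n → ZMod 2))),
      ∃ k : ℤ, g.linear = σ ^ k := by
    have hle : X ≤ (Subgroup.zpowers σ).comap
        (AffineEquiv.linearHom (k := ZMod 2) (P₁ := Fin n → ZMod 2)) := by
      rw [hX]
      refine sup_le ?_ ?_
      · rw [hT]
        rintro g ⟨v, rfl⟩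
        simp only [Subgroup.mem_comap]
        exact ⟨0, by simp; rfl⟩
      · refine Subgroup.zpowers_le.mpr ?_
        simp only [Subgroup.mem_comap]
        exact ⟨1, by simp; rfl⟩
    intro g hg
    rw [hgen] at hg
    obtain ⟨k, hk⟩ := hle hg
    exact ⟨k, hk.symm⟩
  set W : Submodule (ZMod 2) (Fin n → ZMod 2) :=
    Submodule.span (ZMod 2) (Set.range fun i : ℤ => (σ ^ i) (ℓ 0)) with hW
  -- W is invariant under all powers of σ
  have hWinv : ∀ (k : ℤ) (x : Fin n → ZMod 2), x ∈ W → (σ ^ k) x ∈ W := by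
    intro k x hx
    induction hx using Submodule.span_induction with
    | mem y hy =>
      obtain ⟨i, rfl⟩ := hy
      have : (σ ^ k) ((σ ^ i) (ℓ 0)) = (σ ^ (k + i)) (ℓ 0) := by
        rw [zpow_add]; rfl
      rw [this]
      exact Submodule.subset_span ⟨k + i, rfl⟩
    | zero => simpa using W.zero_mem
    | add y z hy hz ihy ihz => simpa [map_add] using W.add_mem ihy ihz
    | smul a y hy ihy => simpa [map_smul] using W.smul_mem a ihy
  -- every element of the closure sends 0 into W
  have hkey : ∀ g ∈ Subgroup.closure
      ({σ.toAffineEquiv, ℓ} : Set ((Fin n → ZMod 2) ≃ᵃ[ZMod 2] (Fin n → ZMod 2))),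
      g 0 ∈ W := by
    intro g hg
    induction hg using Subgroup.closure_induction with
    | mem x hx =>
      rcases hx with h | h
      · subst h
        have : σ.toAffineEquiv (0 : Fin n → ZMod 2) = 0 := by
          simp
        rw [this]; exact W.zero_mem
      · rw [Set.mem_singleton_iff] at h
        subst h
        have : x (0 : Fin n → ZMod 2) = (σ ^ (0 : ℤ)) (x 0) := by simp
        rw [this]
        exact Submodule.subset_span ⟨0, rfl⟩
    | one => simpa using W.zero_mem
    | mul x y hx hy ihx ihy =>
      obtain ⟨k, hk⟩ := hXlin x hx
      have : (x * y) 0 = x.linear (y 0) + x 0 := by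
        rw [show (x * y) (0 : Fin n → ZMod 2) = x (y 0) from rfl, happly x (y 0)]
      rw [this, hk]
      exact W.add_mem (hWinv k _ ihy) ihx
    | inv x hx ihx =>
      obtain ⟨k, hk⟩ := hXlin x hx
      have h0 : x (x⁻¹ 0) = 0 := by
        rw [show x (x⁻¹ (0 : Fin n → ZMod 2)) = (x * x⁻¹) 0 from rfl, mul_inv_cancel]
        rfl
      have h1 : (σ ^ k) (x⁻¹ 0) + x 0 = 0 := by
        rw [← hk, ← happly x (x⁻¹ 0), h0]
      have h2 : (σ ^ k) (x⁻¹ 0) = x 0 := by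
        have := neg_eq_of_add_eq_zero_left h1
        rw [neg_self] at this
        exact this.symm
      have h3 : x⁻¹ 0 = (σ ^ (-k)) (x 0) := by
        rw [← h2, show ((σ ^ (-k)) ((σ ^ k) (x⁻¹ 0))) = ((σ ^ (-k) * σ ^ k) (x⁻¹ 0)) from rfl,
          ← zpow_add, neg_add_cancel, zpow_zero]
        rfl
      rw [h3]
      exact hWinv (-k) _ ihx
  -- W is everything
  have hWtop : ∀ u : Fin n → ZMod 2, u ∈ W := by
    intro u
    have hmem : AffineEquiv.constVAdd (ZMod 2) (Fin n → ZMod 2) u ∈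
        Subgroup.closure ({σ.toAffineEquiv, ℓ} : Set _) := by
      rw [hgen, hX]
      refine le_sup_left (α := Subgroup _) ?_
      rw [hT]
      exact ⟨Multiplicative.ofAdd u, rfl⟩
    have := hkey _ hmem
    simpa [vadd_eq_add] using this
  -- the linear part of ℓ
  obtain ⟨k, hk⟩ := hXlin ℓ (Subgroup.subset_closure (by simp))
  -- σ^k fixes ℓ 0
  have hfixv : (σ ^ k) (ℓ 0) = ℓ 0 := by
    have h0 : ℓ (ℓ 0) = 0 := by
      rw [show ℓ (ℓ (0 : Fin n → ZMod 2)) = (ℓ * ℓ) 0 from rfl, hinv]; rfl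
    have h1 : (σ ^ k) (ℓ 0) + ℓ 0 = 0 := by
      rw [← hk]
      rw [happly ℓ (ℓ 0)] at h0
      exact h0
    have := neg_eq_of_add_eq_zero_left h1
    rw [neg_self] at this
    exact this.symm
  -- hence σ^k = 1
  have hσk : (σ : (Fin n → ZMod 2) ≃ₗ[ZMod 2] (Fin n → ZMod 2)) ^ k = 1 := by
    refine LinearEquiv.ext fun x => ?_
    have hx : x ∈ W := hWtop x
    have : (σ ^ k) x = x := by
      induction hx using Submodule.span_induction with
      | mem y hy =>
        obtain ⟨i, rfl⟩ := hy
        calc (σ ^ k) ((σ ^ i) (ℓ 0)) = (σ ^ (k + i)) (ℓ 0) := by rw [zpow_add]; rfl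
          _ = (σ ^ (i + k)) (ℓ 0) := by rw [add_comm]
          _ = (σ ^ i) ((σ ^ k) (ℓ 0)) := by rw [zpow_add]; rfl
          _ = (σ ^ i) (ℓ 0) := by rw [hfixv]
      | zero => simp
      | add y z hy hz ihy ihz => simp [map_add, ihy, ihz]
      | smul a y hy ihy => simp [map_smul, ihy]
    simpa using this
  -- so ℓ is a translation
  rw [hT]
  refine ⟨Multiplicative.ofAdd (ℓ 0), ?_⟩
  refine AffineEquiv.ext fun x => ?_
  have : ℓ x = x + ℓ 0 := by
    rw [happly ℓ x, hk, hσk]; rfl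
  rw [this]
  show ℓ 0 + x = x + ℓ 0
  exact add_comm _ _
end

section
/- Let p be a prime, X = T ⋊ ⟨σ⟩ ≤ AGL(n,p), and suppose t, t' ∈ T both satisfy ⟨t, σ⟩ = X and ⟨t', σ⟩ = X. Then there exists a polynomial expression f(σ) = i_0 I + i_1 σ + ... + i_{n-1} σ^{n-1} ∈ GL(n,p) commuting with σ such that f(σ)(t) = t'; consequently there is an automorphism of X fixing σ and mapping t to t'. -/
open AffineEquiv Polynomial

section Aux

variable {p n : ℕ} [Fact p.Prime]

private lemma aux_affine_apply (e : (Fin n → ZMod p) ≃ᵃ[ZMod p] (Fin n → ZMod p)) (x) :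
    e x = e.linear x + e 0 := by
  have := AffineMap.map_vadd (e : (Fin n → ZMod p) →ᵃ[ZMod p] (Fin n → ZMod p)) 0 x
  simpa [vadd_eq_add] using this

private lemma aux_zpow_mem (σ : (Fin n → ZMod p) ≃ₗ[ZMod p] (Fin n → ZMod p))
    (W : Submodule (ZMod p) (Fin n → ZMod p))
    (hW : ∀ w ∈ W, σ w ∈ W) :
    ∀ g ∈ Subgroup.zpowers σ, ∀ w ∈ W, g w ∈ W := by
  have hle : W.map σ.toLinearMap ≤ W := by
    rintro _ ⟨w, hw, rfl⟩; exact hW w hw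
  have heq : W.map σ.toLinearMap = W :=
    Submodule.eq_of_le_of_finrank_le hle (le_of_eq (LinearEquiv.finrank_map_eq σ W).symm)
  have hinv : ∀ w ∈ W, σ.symm w ∈ W := by
    intro w hw
    rw [← heq] at hw
    rcases hw with ⟨u, hu, rfl⟩
    simpa using hu
  intro g hg
  rw [Subgroup.zpowers_eq_closure] at hg
  refine (Subgroup.closure_induction
    (p := fun g _ => (∀ w ∈ W, g w ∈ W) ∧ (∀ w ∈ W, g⁻¹ w ∈ W)) ?_ ?_ ?_ ?_ hg).1
  · rintro x hx
    rcases Set.mem_singleton_iff.mp hx with rfl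
    exact ⟨hW, hinv⟩
  · exact ⟨fun w hw => hw, fun w hw => hw⟩
  · rintro x y hx hy ⟨hx1, hx2⟩ ⟨hy1, hy2⟩
    constructor
    · intro w hw; exact hx1 _ (hy1 w hw)
    · intro w hw
      rw [mul_inv_rev]
      exact hy2 _ (hx2 w hw)
  · rintro x hx ⟨hx1, hx2⟩
    exact ⟨hx2, by simpa using hx1⟩

private lemma aux_span (σ : (Fin n → ZMod p) ≃ₗ[ZMod p] (Fin n → ZMod p))
    (t : Fin n → ZMod p)
    (h : ∀ v : Fin n → ZMod p, AffineEquiv.constVAdd (ZMod p) (Fin n → ZMod p) v ∈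
      Subgroup.closure
        {AffineEquiv.constVAdd (ZMod p) (Fin n → ZMod p) t, σ.toAffineEquiv}) :
    Submodule.span (ZMod p) (Set.range fun k : ℕ => (σ.toLinearMap ^ k) t) = ⊤ := by
  set W := Submodule.span (ZMod p) (Set.range fun k : ℕ => (σ.toLinearMap ^ k) t) with hWdef
  have hgen : ∀ k : ℕ, (σ.toLinearMap ^ k) t ∈ W := fun k => Submodule.subset_span ⟨k, rfl⟩
  have hσW : ∀ w ∈ W, σ w ∈ W := by
    intro w hw
    refine Submodule.span_induction ?_ (by simpa using W.zero_mem)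
      (fun x y _ _ hx hy => by rw [map_add]; exact W.add_mem hx hy)
      (fun c x _ hx => by rw [map_smul]; exact W.smul_mem c hx) hw
    rintro _ ⟨k, rfl⟩
    have hh : σ ((σ.toLinearMap ^ k) t) = (σ.toLinearMap ^ (k + 1)) t := by
      rw [pow_succ']; rfl
    rw [hh]; exact hgen _
  have key : ∀ e ∈ Subgroup.closure
      {AffineEquiv.constVAdd (ZMod p) (Fin n → ZMod p) t, σ.toAffineEquiv},
      e 0 ∈ W ∧ e.linear ∈ Subgroup.zpowers σ := by
    intro e he
    refine Subgroup.closure_induction ?_ ?_ ?_ ?_ he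
    · rintro x (rfl | rfl)
      · constructor
        · have : AffineEquiv.constVAdd (ZMod p) (Fin n → ZMod p) t 0 = t := by
            show t + 0 = t; rw [add_zero]
          rw [this]
          simpa using hgen 0
        · have : (AffineEquiv.constVAdd (ZMod p) (Fin n → ZMod p) t).linear = 1 := rfl
          rw [this]; exact Subgroup.one_mem _
      · constructor
        · simpa using W.zero_mem
        · exact Subgroup.mem_zpowers σ
    · exact ⟨by simpa using W.zero_mem, Subgroup.one_mem _⟩
    · rintro x y hx hy ⟨hx0, hxl⟩ ⟨hy0, hyl⟩
      constructor
      · have : (x * y) 0 = x.linear (y 0) + x 0 := aux_affine_apply x (y 0)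
        rw [this]
        exact W.add_mem (aux_zpow_mem σ W hσW x.linear hxl _ hy0) hx0
      · exact Subgroup.mul_mem _ hxl hyl
    · rintro x hx ⟨hx0, hxl⟩
      constructor
      · have h3 : x (x⁻¹ 0) = 0 := by
          have h2 : (x * x⁻¹) 0 = (1 : (Fin n → ZMod p) ≃ᵃ[ZMod p] (Fin n → ZMod p)) 0 := by
            rw [mul_inv_cancel]
          exact h2
        have h1 : x.linear (x⁻¹ 0) + x 0 = 0 :=
          (aux_affine_apply x (x⁻¹ 0)).symm.trans h3
        have h4 : x.linear (x⁻¹ 0) = -(x 0) := eq_neg_of_add_eq_zero_left h1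
        have h5 : x.linear (x⁻¹ 0) ∈ W := h4 ▸ W.neg_mem hx0
        have h6 := aux_zpow_mem σ W hσW x.linear⁻¹ (Subgroup.inv_mem _ hxl) _ h5
        have h7 : x.linear⁻¹ (x.linear (x⁻¹ 0)) = x⁻¹ 0 := by
          show (x.linear⁻¹ * x.linear) (x⁻¹ 0) = x⁻¹ 0
          rw [inv_mul_cancel]; rfl
        rwa [h7] at h6
      · exact Subgroup.inv_mem _ hxl
  refine eq_top_iff.mpr fun v _ => ?_
  have hv := (key _ (h v)).1
  have : AffineEquiv.constVAdd (ZMod p) (Fin n → ZMod p) v 0 = v := by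
    show v + 0 = v; rw [add_zero]
  rwa [this] at hv

private lemma aux_span_fin (σ : (Fin n → ZMod p) ≃ₗ[ZMod p] (Fin n → ZMod p))
    (hmin : (minpoly (ZMod p) σ.toLinearMap).natDegree = n)
    (t : Fin n → ZMod p)
    (hspan : Submodule.span (ZMod p) (Set.range fun k : ℕ => (σ.toLinearMap ^ k) t) = ⊤) :
    Submodule.span (ZMod p) (Set.range fun i : Fin n => (σ.toLinearMap ^ (i : ℕ)) t) = ⊤ := by
  set W' := Submodule.span (ZMod p) (Set.range fun i : Fin n => (σ.toLinearMap ^ (i : ℕ)) t)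
    with hW'def
  have hgen : ∀ i : Fin n, (σ.toLinearMap ^ (i : ℕ)) t ∈ W' :=
    fun i => Submodule.subset_span ⟨i, rfl⟩
  have hσnt : 0 < n → (σ.toLinearMap ^ n) t ∈ W' := by
    intro hn
    have hint : IsIntegral (ZMod p) σ.toLinearMap := Algebra.IsIntegral.isIntegral _
    set m := minpoly (ZMod p) σ.toLinearMap with hm
    have hm0 : aeval σ.toLinearMap m = 0 := minpoly.aeval _ _
    have hmonic : m.Monic := minpoly.monic hint
    set q : (ZMod p)[X] := X ^ n - m with hq
    have hdeg : q.natDegree < n := by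
      by_cases h0 : q = 0
      · simpa [h0] using hn
      · have hdm : m.degree = (n : WithBot ℕ) := by
          rw [degree_eq_natDegree hmonic.ne_zero, hmin]
        have hdlt : q.degree < (X ^ n : (ZMod p)[X]).degree := by
          apply degree_sub_lt
          · rw [degree_X_pow, hdm]
          · exact pow_ne_zero _ X_ne_zero
          · rw [leadingCoeff_X_pow, hmonic.leadingCoeff]
        rw [degree_X_pow] at hdlt
        exact (natDegree_lt_iff_degree_lt h0).mpr hdlt
    have hσn : (σ.toLinearMap ^ n) = aeval σ.toLinearMap q := by
      rw [hq, map_sub, hm0, sub_zero, aeval_X_pow]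
    rw [hσn, aeval_eq_sum_range' hdeg]
    rw [LinearMap.coe_sum, Finset.sum_apply]
    refine Submodule.sum_mem _ fun i hi => ?_
    rw [LinearMap.smul_apply]
    exact W'.smul_mem _ (hgen ⟨i, Finset.mem_range.mp hi⟩)
  have hσW' : ∀ w ∈ W', σ.toLinearMap w ∈ W' := by
    intro w hw
    refine Submodule.span_induction ?_ (by simpa using W'.zero_mem)
      (fun x y _ _ hx hy => by rw [map_add]; exact W'.add_mem hx hy)
      (fun c x _ hx => by rw [map_smul]; exact W'.smul_mem c hx) hw
    rintro _ ⟨i, rfl⟩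
    have hh : σ.toLinearMap ((σ.toLinearMap ^ (i : ℕ)) t) = (σ.toLinearMap ^ ((i : ℕ) + 1)) t := by
      rw [pow_succ']; rfl
    rw [hh]
    rcases lt_or_eq_of_le (Nat.succ_le_of_lt i.isLt) with h | h
    · exact hgen ⟨(i : ℕ) + 1, h⟩
    · have h' : (i : ℕ) + 1 = n := h
      rw [h']; exact hσnt i.pos
  have ht : t ∈ W' := by
    rcases Nat.eq_zero_or_pos n with hn | hn
    · have : t = 0 := by
        subst hn; exact Subsingleton.elim _ _
      rw [this]; exact W'.zero_mem
    · simpa using hgen ⟨0, hn⟩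
  have hall : ∀ k : ℕ, (σ.toLinearMap ^ k) t ∈ W' := by
    intro k
    induction k with
    | zero => simpa using ht
    | succ k ih =>
      have hh : (σ.toLinearMap ^ (k + 1)) t = σ.toLinearMap ((σ.toLinearMap ^ k) t) := by
        rw [pow_succ']; rfl
      rw [hh]; exact hσW' _ ih
  rw [← top_le_iff, ← hspan]
  exact Submodule.span_le.mpr (by rintro _ ⟨k, rfl⟩; exact hall k)

end Aux

/-- Let `X = T ⋊ ⟨σ⟩ ≤ AGL(n,p)` and suppose `t, t' ∈ T` both satisfy `⟨t, σ⟩ = X`.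
Then there is a polynomial expression `f(σ) = i₀ I + i₁ σ + ⋯ + i_{n-1} σ^{n-1}`,
invertible and commuting with `σ`, with `f(σ)(t) = t'`; consequently there is an
automorphism of `X` fixing `σ` and mapping `t` to `t'`. -/
theorem stmt_10 (p n : ℕ) (hp : p.Prime) [Fact p.Prime]
    (σ : (Fin n → ZMod p) ≃ₗ[ZMod p] (Fin n → ZMod p))
    (hmin : (minpoly (ZMod p) σ.toLinearMap).natDegree = n)
    (T X : Subgroup ((Fin n → ZMod p) ≃ᵃ[ZMod p] (Fin n → ZMod p)))
    (hT : T = (AffineEquiv.constVAddHom (ZMod p) (Fin n → ZMod p)).range)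
    (hX : X = T ⊔ Subgroup.zpowers σ.toAffineEquiv)
    (t t' : Fin n → ZMod p)
    (hgen : Subgroup.closure
      {AffineEquiv.constVAdd (ZMod p) (Fin n → ZMod p) t, σ.toAffineEquiv} = X)
    (hgen' : Subgroup.closure
      {AffineEquiv.constVAdd (ZMod p) (Fin n → ZMod p) t', σ.toAffineEquiv} = X)
    (hmemσ : σ.toAffineEquiv ∈ X)
    (hmemt : AffineEquiv.constVAdd (ZMod p) (Fin n → ZMod p) t ∈ X)
    (hmemt' : AffineEquiv.constVAdd (ZMod p) (Fin n → ZMod p) t' ∈ X) :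
    (∃ c : Fin n → ZMod p,
      Function.Bijective (∑ i : Fin n, c i • σ.toLinearMap ^ (i : ℕ)) ∧
      (∑ i : Fin n, c i • σ.toLinearMap ^ (i : ℕ)) ∘ₗ σ.toLinearMap =
        σ.toLinearMap ∘ₗ (∑ i : Fin n, c i • σ.toLinearMap ^ (i : ℕ)) ∧
      (∑ i : Fin n, c i • σ.toLinearMap ^ (i : ℕ)) t = t') ∧
    ∃ ψ : X ≃* X,
      ψ ⟨σ.toAffineEquiv, hmemσ⟩ = ⟨σ.toAffineEquiv, hmemσ⟩ ∧
      ψ ⟨AffineEquiv.constVAdd (ZMod p) (Fin n → ZMod p) t, hmemt⟩ =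
        ⟨AffineEquiv.constVAdd (ZMod p) (Fin n → ZMod p) t', hmemt'⟩ := by
  have hTX : ∀ v : Fin n → ZMod p,
      AffineEquiv.constVAdd (ZMod p) (Fin n → ZMod p) v ∈ T := by
    intro v; rw [hT]; exact ⟨v, rfl⟩
  have hmem : ∀ v : Fin n → ZMod p,
      AffineEquiv.constVAdd (ZMod p) (Fin n → ZMod p) v ∈ X := by
    intro v; rw [hX]; exact Subgroup.mem_sup_left (hTX v)
  have h1 : ∀ v, AffineEquiv.constVAdd (ZMod p) (Fin n → ZMod p) v ∈
      Subgroup.closure {AffineEquiv.constVAdd (ZMod p) (Fin n → ZMod p) t, σ.toAffineEquiv} := by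
    intro v; rw [hgen]; exact hmem v
  have h1' : ∀ v, AffineEquiv.constVAdd (ZMod p) (Fin n → ZMod p) v ∈
      Subgroup.closure {AffineEquiv.constVAdd (ZMod p) (Fin n → ZMod p) t', σ.toAffineEquiv} := by
    intro v; rw [hgen']; exact hmem v
  have hfin := aux_span_fin σ hmin t (aux_span σ t h1)
  have hfin' := aux_span_fin σ hmin t' (aux_span σ t' h1')
  have ht' : t' ∈ Submodule.span (ZMod p)
      (Set.range fun i : Fin n => (σ.toLinearMap ^ (i : ℕ)) t) := by
    rw [hfin]; trivial
  obtain ⟨c, hc⟩ := (Submodule.mem_span_range_iff_exists_fun (ZMod p)).mp ht'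
  set f : (Fin n → ZMod p) →ₗ[ZMod p] (Fin n → ZMod p) :=
    ∑ i : Fin n, c i • σ.toLinearMap ^ (i : ℕ) with hf
  have hft : f t = t' := by
    rw [hf, LinearMap.coe_sum, Finset.sum_apply]
    simpa [LinearMap.smul_apply] using hc
  have hcomm : Commute σ.toLinearMap f := by
    refine Finset.sum_induction _ _ (fun a b => Commute.add_right) (Commute.zero_right _) ?_
    intro i _
    exact ((Commute.refl σ.toLinearMap).pow_right (i : ℕ)).smul_right (c i)
  have hcommpow : ∀ k : ℕ, ∀ x, f ((σ.toLinearMap ^ k) x) = (σ.toLinearMap ^ k) (f x) := by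
    intro k x
    have := (hcomm.pow_left k).symm.eq
    calc f ((σ.toLinearMap ^ k) x) = (f * σ.toLinearMap ^ k) x := rfl
      _ = (σ.toLinearMap ^ k * f) x := by rw [this]
      _ = (σ.toLinearMap ^ k) (f x) := rfl
  have hsurj : Function.Surjective f := by
    rw [← LinearMap.range_eq_top, ← top_le_iff, ← hfin']
    refine Submodule.span_le.mpr ?_
    rintro _ ⟨i, rfl⟩
    refine ⟨(σ.toLinearMap ^ (i : ℕ)) t, ?_⟩
    rw [hcommpow, hft]
  have hinj : Function.Injective f := LinearMap.injective_iff_surjective.mpr hsurj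
  have hbij : Function.Bijective f := ⟨hinj, hsurj⟩
  have hcompeq : f ∘ₗ σ.toLinearMap = σ.toLinearMap ∘ₗ f := by
    rw [← Module.End.mul_eq_comp, ← Module.End.mul_eq_comp]
    exact hcomm.eq.symm
  have hbij2 : Function.Bijective (∑ i : Fin n, ⇑(c i • σ.toLinearMap ^ (i : ℕ))) := by
    rw [← LinearMap.coe_sum]
    exact hbij
  refine ⟨⟨c, hbij2, hcompeq, hft⟩, ?_⟩
  -- automorphism part
  set g : (Fin n → ZMod p) ≃ₗ[ZMod p] (Fin n → ZMod p) := LinearEquiv.ofBijective f hbij with hg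
  set a : (Fin n → ZMod p) ≃ᵃ[ZMod p] (Fin n → ZMod p) := g.toAffineEquiv with ha
  have haf : ∀ x, a x = f x := fun _ => rfl
  have hainv : ∀ x, f (a⁻¹ x) = x := by
    intro x
    have : (a * a⁻¹) x = x := by rw [mul_inv_cancel]; rfl
    exact this
  have hcomm_aff : a * σ.toAffineEquiv = σ.toAffineEquiv * a := by
    refine AffineEquiv.ext fun x => ?_
    show f (σ x) = σ (f x)
    exact LinearMap.congr_fun hcompeq x
  have hconjσ : a * σ.toAffineEquiv * a⁻¹ = σ.toAffineEquiv := by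
    rw [hcomm_aff, mul_assoc, mul_inv_cancel, mul_one]
  have hconjv : ∀ v, a * AffineEquiv.constVAdd (ZMod p) (Fin n → ZMod p) v * a⁻¹ =
      AffineEquiv.constVAdd (ZMod p) (Fin n → ZMod p) (f v) := by
    intro v
    refine AffineEquiv.ext fun x => ?_
    show f (v + a⁻¹ x) = f v + x
    rw [map_add, hainv]
  set cA : ((Fin n → ZMod p) ≃ᵃ[ZMod p] (Fin n → ZMod p)) ≃*
      ((Fin n → ZMod p) ≃ᵃ[ZMod p] (Fin n → ZMod p)) := MulAut.conj a with hcA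
  have hcA_apply : ∀ e, cA e = a * e * a⁻¹ := fun _ => rfl
  have hTmap : T.map cA.toMonoidHom = T := by
    rw [hT]
    apply le_antisymm
    · rintro _ ⟨_, ⟨v, rfl⟩, rfl⟩
      refine ⟨Multiplicative.ofAdd (f (Multiplicative.toAdd v)), ?_⟩
      show AffineEquiv.constVAdd (ZMod p) (Fin n → ZMod p) (f (Multiplicative.toAdd v)) =
        cA (AffineEquiv.constVAdd (ZMod p) (Fin n → ZMod p) (Multiplicative.toAdd v))
      rw [hcA_apply]
      exact (hconjv _).symm
    · rintro _ ⟨v, rfl⟩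
      refine ⟨AffineEquiv.constVAdd (ZMod p) (Fin n → ZMod p) (g.symm (Multiplicative.toAdd v)),
        ⟨Multiplicative.ofAdd (g.symm (Multiplicative.toAdd v)), rfl⟩, ?_⟩
      show cA (AffineEquiv.constVAdd (ZMod p) (Fin n → ZMod p) (g.symm (Multiplicative.toAdd v))) =
        AffineEquiv.constVAdd (ZMod p) (Fin n → ZMod p) (Multiplicative.toAdd v)
      rw [hcA_apply, hconjv]
      congr 1
      exact g.apply_symm_apply _
  have hσmap : (Subgroup.zpowers σ.toAffineEquiv).map cA.toMonoidHom =
      Subgroup.zpowers σ.toAffineEquiv := by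
    have hcs : cA σ.toAffineEquiv = σ.toAffineEquiv := by
      rw [hcA_apply]; exact hconjσ
    rw [MonoidHom.map_zpowers]
    exact congrArg Subgroup.zpowers hcs
  have hXmap : X.map cA.toMonoidHom = X := by
    rw [hX, Subgroup.map_sup, hTmap, hσmap]
  refine ⟨(cA.subgroupMap X).trans (MulEquiv.subgroupCongr hXmap), ?_, ?_⟩
  · apply Subtype.ext
    show cA σ.toAffineEquiv = σ.toAffineEquiv
    rw [hcA_apply]; exact hconjσ
  · apply Subtype.ext
    show cA (AffineEquiv.constVAdd (ZMod p) (Fin n → ZMod p) t) =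
      AffineEquiv.constVAdd (ZMod p) (Fin n → ZMod p) t'
    rw [hcA_apply, hconjv, hft]
end

section
/- Let p be an odd prime, σ ∈ GL(n,p) of order α = kp^m with p ∤ k and k ≡ 0 (mod 4), and suppose -I = σ^{α/2}. Let T ≅ F_p^n be the translation group, t ∈ T with ⟨t⟩^{⟨σ⟩} = T, set r = σ and ℓ = t·(-I) in T ⋊ ⟨σ⟩. Then the order of rℓ equals α. -/
private lemma le_mul_apply {R M : Type*} [CommRing R] [AddCommGroup M] [Module R M]
    (f g : M ≃ₗ[R] M) (x : M) : (f * g) x = f (g x) := rfl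

/-- Let `p` be an odd prime, `σ ∈ GL(n,p)` of order `α = k·p^m` with `p ∤ k` and
`k ≡ 0 (mod 4)`, with `σ^(α/2) = -I`.  Let `t` generate `T` as a `⟨σ⟩`-module, and set
`r = σ`, `ℓ = t·(-I)` in `T ⋊ ⟨σ⟩`.  Then the order of `r·ℓ` equals `α`. -/
theorem stmt_13 (p n : ℕ) (hp : p.Prime) (hodd : p ≠ 2) [Fact p.Prime]
    (σ : (Fin n → ZMod p) ≃ₗ[ZMod p] (Fin n → ZMod p))
    (k m α : ℕ) (hk : ¬ p ∣ k) (hk4 : k % 4 = 0)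
    (hα : α = k * p ^ m) (horder : orderOf σ = α)
    (hneg : σ ^ (α / 2) = LinearEquiv.neg (ZMod p))
    (t : Fin n → ZMod p)
    (hspan : Submodule.span (ZMod p) (Set.range fun i : ℕ => (σ ^ i) t) = ⊤)
    (r ℓ : (Fin n → ZMod p) ≃ᵃ[ZMod p] (Fin n → ZMod p))
    (hr : r = σ.toAffineEquiv)
    (hℓ : ℓ = AffineEquiv.constVAdd (ZMod p) (Fin n → ZMod p) t *
      (LinearEquiv.neg (ZMod p)).toAffineEquiv) :
    orderOf (r * ℓ) = α := by
  set N : (Fin n → ZMod p) ≃ₗ[ZMod p] (Fin n → ZMod p) := LinearEquiv.neg (ZMod p) with hN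
  set h := α / 2 with hh
  obtain ⟨k', rfl⟩ : 4 ∣ k := Nat.dvd_of_mod_eq_zero hk4
  have hk'0 : k' ≠ 0 := by rintro rfl; exact hk (by simp)
  have hα2 : α = 2 * h := by
    have : α = 2 * (2 * k' * p ^ m) := by rw [hα]; ring
    omega
  have hheven : 2 ∣ h := by
    have : α = 2 * (2 * (k' * p ^ m)) := by rw [hα]; ring
    omega
  have hhpos : 0 < h := by
    have h1 : 0 < p ^ m := pow_pos hp.pos m
    have : 0 < α := by rw [hα]; positivity
    omega
  set M : (Fin n → ZMod p) ≃ₗ[ZMod p] (Fin n → ZMod p) := σ * N with hM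
  have hcomm : σ * N = N * σ := by
    ext x
    rw [le_mul_apply, le_mul_apply, hN]
    simp [LinearEquiv.neg_apply, map_neg]
  have hMpow : M = σ ^ (h + 1) := by
    rw [hM, hcomm, ← hneg, pow_succ]
  have hcop : Nat.Coprime α (h + 1) := by
    have hd2 : Nat.gcd α (h + 1) ∣ 2 := by
      have h1 : Nat.gcd α (h + 1) ∣ 2 * (h + 1) := (Nat.gcd_dvd_right _ _).mul_left 2
      have h2 : Nat.gcd α (h + 1) ∣ α := Nat.gcd_dvd_left _ _
      have h3 : 2 * (h + 1) - α = 2 := by omega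
      have := Nat.dvd_sub h1 h2
      rwa [h3] at this
    rcases (Nat.dvd_prime Nat.prime_two).mp hd2 with h1 | h2
    · exact h1
    · exfalso
      have := h2 ▸ Nat.gcd_dvd_right α (h + 1)
      omega
  have hMord : orderOf M = α := by
    rw [hMpow, orderOf_pow' σ (Nat.succ_ne_zero h), horder, hcop.gcd_eq_one, Nat.div_one]
  have hgapp : ∀ x, (r * ℓ) x = σ t + M x := by
    intro x
    rw [hr, hℓ]
    show σ (t + -x) = σ t + σ (-x)
    rw [map_add]
  have key : ∀ (j : ℕ) (x : Fin n → ZMod p),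
      ((r * ℓ) ^ j) x = (∑ i ∈ Finset.range j, (M ^ i) (σ t)) + (M ^ j) x := by
    intro j
    induction j with
    | zero => intro x; simp
    | succ j ih =>
      intro x
      rw [pow_succ, AffineEquiv.coe_mul, Function.comp_apply, ih, hgapp, map_add,
        Finset.sum_range_succ, pow_succ, le_mul_apply]
      abel
  have hMh : M ^ h = N := by
    have hdvd : α ∣ h * h := by
      obtain ⟨c, hc⟩ := hheven
      exact ⟨c, by rw [hα2, hc]; ring⟩
    have h1 : σ ^ (h * h) = 1 := by
      rw [← horder] at hdvd; exact orderOf_dvd_iff_pow_eq_one.mp hdvd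
    calc M ^ h = σ ^ ((h + 1) * h) := by rw [hMpow, ← pow_mul]
    _ = σ ^ (h * h) * σ ^ h := by rw [show (h + 1) * h = h * h + h from by ring, pow_add]
    _ = N := by rw [h1, one_mul, hneg]
  have hpow1 : (r * ℓ) ^ α = 1 := by
    have hM1 : M ^ α = 1 := by rw [← hMord]; exact pow_orderOf_eq_one M
    have hsum0 : (∑ i ∈ Finset.range α, (M ^ i) (σ t)) = 0 := by
      rw [hα2, two_mul, Finset.sum_range_add]
      have hpair : ∀ i, (M ^ (h + i)) (σ t) = -((M ^ i) (σ t)) := by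
        intro i
        rw [add_comm, pow_add, le_mul_apply, hMh]
        rw [show N (σ t) = -(σ t) from rfl, map_neg]
      simp only [hpair, Finset.sum_neg_distrib]
      abel
    ext x
    rw [key, hM1, hsum0]
    simp
  refine Nat.dvd_antisymm (orderOf_dvd_of_pow_eq_one hpow1) ?_
  have hlin : AffineEquiv.linearHom (r * ℓ) = M := by
    rw [map_mul, hr, hℓ, map_mul]
    show σ * (1 * N) = M
    rw [one_mul, hM]
  calc α = orderOf M := hMord.symm
  _ = orderOf (AffineEquiv.linearHom (r * ℓ)) := by rw [hlin]
  _ ∣ orderOf (r * ℓ) := orderOf_map_dvd _ _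
end

section
/- Let p be an odd prime, σ ∈ GL(n,p) of order α = kp^m with p ∤ k and k ≡ 2 (mod 4), with σ^{α/2} = -I and T = ⟨t⟩^{⟨σ⟩} ≅ F_p^n for some t. Let f_1(x) be the minimal polynomial of σ^2 and set r = σ, ℓ = t·(-I). Then o(rℓ) = α/2 if (x-1)^{p^m} does not divide f_1(x), and o(rℓ) = pα/2 if (x-1)^{p^m} exactly divides f_1(x). -/
open Polynomial Finset

lemma aux_mod {β a : ℕ} (ha : a < β) (h : β ≤ 2*a) : 2 * a % β = 2 * a - β := by
  rw [Nat.mod_eq_sub_mod h, Nat.mod_eq_of_lt (by omega)]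

lemma aux_sum_neg {R : Type*} [Ring R] (u : R) (β : ℕ) (hβ : β % 2 = 1) (hu : u ^ β = -1) :
    ∑ j ∈ Finset.range β, (u ^ 2) ^ j = ∑ i ∈ Finset.range β, (-u) ^ i := by
  refine Finset.sum_nbij' (fun j => 2 * j % β) (fun i => if i % 2 = 0 then i / 2 else (i + β) / 2)
    ?_ ?_ ?_ ?_ ?_
  · intro a ha; simp only [Finset.mem_range] at *
    exact Nat.mod_lt _ (by omega)
  · intro a ha; simp only [Finset.mem_range] at *; split <;> omega
  · intro a ha; simp only [Finset.mem_range] at *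
    rcases Nat.lt_or_ge (2*a) β with h | h
    · rw [Nat.mod_eq_of_lt h]; split <;> omega
    · rw [aux_mod ha h]; split <;> omega
  · intro a ha; simp only [Finset.mem_range] at ha
    split
    · next he => rw [Nat.mod_eq_of_lt (by omega)]; omega
    · next he => rw [aux_mod (by omega) (by omega)]; omega
  · intro a ha; simp only [Finset.mem_range] at ha
    rcases Nat.lt_or_ge (2*a) β with h | h
    · rw [Nat.mod_eq_of_lt h, Even.neg_pow ⟨a, by ring⟩, ← pow_mul]
    · rw [aux_mod ha h, Odd.neg_pow ⟨(2*a - β - 1)/2, by omega⟩]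
      have key : u ^ (2*a) = -u ^ (2*a - β) := by
        have h4 : 2 * a = β + (2*a - β) := by omega
        rw [h4, pow_add, hu, neg_one_mul, Nat.add_sub_cancel_left]
      rw [← pow_mul, key]

theorem aux_main {K M : Type*} [Field K] [AddCommGroup M] [Module K M]
    (p : ℕ) [Fact p.Prime] [CharP K p] (hodd : p ≠ 2)
    (σ : M ≃ₗ[K] M)
    (k m α : ℕ) (hk : ¬ p ∣ k) (hk2 : k % 4 = 2)
    (hα : α = k * p ^ m) (horder : orderOf σ = α)
    (hneg : σ ^ (α / 2) = LinearEquiv.neg K)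
    (t : M)
    (hspan : Submodule.span K (Set.range fun i : ℕ => (σ ^ i) t) = ⊤)
    (f₁ : Polynomial K)
    (hf₁ : f₁ = minpoly K (σ ^ 2).toLinearMap)
    (r ℓ : M ≃ᵃ[K] M)
    (hr : r = σ.toAffineEquiv)
    (hℓ : ℓ = AffineEquiv.constVAdd K M t * (LinearEquiv.neg K).toAffineEquiv) :
    (¬ (X - 1) ^ p ^ m ∣ f₁ → orderOf (r * ℓ) = α / 2) ∧
    ((X - 1) ^ p ^ m ∣ f₁ ∧ ¬ (X - 1) ^ (p ^ m + 1) ∣ f₁ →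
      orderOf (r * ℓ) = p * (α / 2)) := by
  classical
  have hp : p.Prime := Fact.out
  -- numerics
  set k2 := k / 2 with hk2def
  have hkeven : k = 2 * k2 := by omega
  set N := p ^ m with hNdef
  have hN1 : 0 < N := pow_pos hp.pos m
  set β := k2 * N with hβdef
  have hα2 : α = 2 * β := by rw [hα, hkeven, hβdef]; ring
  have hβα : α / 2 = β := by omega
  have hpodd : p % 2 = 1 := by
    have h2 : ¬ (2 ∣ p) := fun h => hodd ((Nat.prime_dvd_prime_iff_eq Nat.prime_two hp).mp h).symm
    have := hp.two_le; omega
  have hβodd : β % 2 = 1 := by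
    have h1 : Odd β := Odd.mul (Nat.odd_iff.mpr (by omega)) (Odd.pow (Nat.odd_iff.mpr hpodd))
    exact Nat.odd_iff.mp h1
  have hβpos : 0 < β := by rw [hβdef]; exact Nat.mul_pos (by omega) hN1
  -- the endomorphism τ
  set τ : Module.End K M := σ.toLinearMap with hτ
  have hτpow : ∀ (j : ℕ) (x : M), (τ ^ j) x = (σ ^ j) x := by
    intro j
    induction j with
    | zero => intro x; rfl
    | succ j ih =>
        intro x
        have h1 : (σ ^ (j+1)) x = (σ ^ j) (σ x) := by rw [pow_succ]; rfl
        rw [h1, pow_succ, Module.End.mul_apply, ih]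
        rfl
  have hτσ : ∀ j : ℕ, τ ^ j = 1 ↔ σ ^ j = 1 := by
    intro j
    constructor
    · intro h
      apply LinearEquiv.ext
      intro x
      rw [show ((σ ^ j) x) = (τ ^ j) x from (hτpow j x).symm, h]
      rfl
    · intro h
      apply LinearMap.ext
      intro x
      rw [hτpow, h]
      rfl
  have hσone : ∀ j : ℕ, σ ^ j = 1 ↔ α ∣ j := by
    intro j; rw [← horder, ← orderOf_dvd_iff_pow_eq_one]
  have hτβ : τ ^ β = -1 := by
    apply LinearMap.ext
    intro x
    rw [hτpow, ← hβα, hneg]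
    rfl
  have hτ2β : τ ^ (2 * β) = 1 := by
    rw [pow_mul', hτβ, neg_one_sq]
  have hnegτβ : (-τ) ^ β = 1 := by
    rw [Odd.neg_pow (Nat.odd_iff.mpr hβodd), hτβ, neg_neg]
  -- affine map computations
  have hrl : ∀ x : M, (r * ℓ) x = τ t - τ x := by
    intro x
    rw [hr, hℓ]
    show σ ((AffineEquiv.constVAdd K M t) ((LinearEquiv.neg K) x)) = τ t - τ x
    rw [LinearEquiv.neg_apply]
    show σ (t + -x) = τ t - τ x
    rw [← sub_eq_add_neg, map_sub]
    rfl
  have hpowrl : ∀ (j : ℕ) (x : M),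
      ((r * ℓ) ^ j) x = ((-τ) ^ j) x + (∑ i ∈ Finset.range j, (-τ) ^ i) (τ t) := by
    intro j
    induction j with
    | zero =>
        intro x
        rw [pow_zero, pow_zero]
        simp only [Finset.range_zero, Finset.sum_empty, LinearMap.zero_apply, add_zero]
        rfl
    | succ j ih =>
        intro x
        have h1 : ((r * ℓ) ^ (j+1)) x = (r * ℓ) (((r * ℓ) ^ j) x) := by
          rw [pow_succ']; rfl
        have e1 : ((-τ) ^ (j+1)) x = -(τ (((-τ) ^ j) x)) := by
          rw [pow_succ', Module.End.mul_apply, LinearMap.neg_apply]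
        have e2 : (∑ i ∈ Finset.range (j+1), (-τ) ^ i) (τ t) =
            -(τ ((∑ i ∈ Finset.range j, (-τ) ^ i) (τ t))) + τ t := by
          rw [geom_sum_succ, LinearMap.add_apply, Module.End.mul_apply, LinearMap.neg_apply,
            Module.End.one_apply]
        rw [h1, ih, hrl, e1, e2, map_add]
        abel
  -- the sum S
  set S : Module.End K M := ∑ i ∈ Finset.range β, (-τ) ^ i with hS
  have hcommτ : Commute S τ := by
    apply Commute.sum_left
    intro i _
    exact ((Commute.refl τ).neg_left.pow_left i)
  have hτinj : Function.Injective τ := σ.injective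
  have hSt_iff : S (τ t) = 0 ↔ S t = 0 := by
    have h1 : S (τ t) = τ (S t) := by
      rw [← Module.End.mul_apply, ← Module.End.mul_apply, hcommτ.eq]
    rw [h1]
    constructor
    · intro h; apply hτinj; rw [h]; exact (map_zero _).symm
    · intro h; rw [h]; exact map_zero _
  have hSzero_iff : S t = 0 ↔ S = 0 := by
    constructor
    · intro h
      apply LinearMap.ext_on hspan
      rintro x ⟨i, rfl⟩
      show S ((σ ^ i) t) = 0
      rw [show ((σ ^ i) t) = (τ ^ i) t from (hτpow i t).symm]
      have h2 : S ((τ ^ i) t) = (τ ^ i) (S t) := by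
        rw [← Module.End.mul_apply, ← Module.End.mul_apply, (hcommτ.pow_right i).eq]
      rw [h2, h, map_zero]
    · intro h; rw [h]; rfl
  -- polynomial G and the minimal polynomial criterion
  set G : Polynomial K := ∑ i ∈ Finset.range β, X ^ i with hG
  have hτ2 : (σ ^ 2).toLinearMap = τ ^ 2 := by
    apply LinearMap.ext
    intro x
    exact (hτpow 2 x).symm
  have hf₁' : f₁ = minpoly K (τ ^ 2) := by rw [hf₁, hτ2]
  have hevalG : Polynomial.aeval (τ ^ 2) G = S := by
    rw [hG, map_sum]
    simp only [map_pow, aeval_X]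
    exact aux_sum_neg τ β hβodd hτβ
  have hSf₁ : S = 0 ↔ f₁ ∣ G := by
    rw [← hevalG, hf₁']
    constructor
    · intro h; exact minpoly.dvd _ _ h
    · rintro ⟨q, hq⟩; rw [hq, map_mul, minpoly.aeval, zero_mul]
  have hc_iff : S (τ t) = 0 ↔ f₁ ∣ G := by rw [hSt_iff, hSzero_iff, hSf₁]
  -- order computations
  set d := orderOf (r * ℓ) with hd
  have hrlβ : ∀ x : M, ((r * ℓ) ^ β) x = x + S (τ t) := by
    intro x
    rw [hpowrl, hnegτβ]
    rfl
  have hrlβc : (r * ℓ) ^ β = AffineEquiv.constVAdd K M (S (τ t)) := by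
    apply AffineEquiv.ext
    intro x
    rw [hrlβ]
    exact add_comm _ _
  have hrlpβ : (r * ℓ) ^ (p * β) = 1 := by
    rw [mul_comm p β, pow_mul, hrlβc, ← AffineEquiv.constVAdd_nsmul]
    have hz : (p : ℕ) • (S (τ t)) = 0 := by
      rw [← Nat.cast_smul_eq_nsmul K, CharP.cast_eq_zero K p, zero_smul]
    rw [hz]
    exact AffineEquiv.constVAdd_zero _ _
  have hddvd : d ∣ p * β := orderOf_dvd_of_pow_eq_one hrlpβ
  have hd0 : d ≠ 0 := by
    intro h
    rw [h] at hddvd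
    exact Nat.mul_ne_zero hp.pos.ne' hβpos.ne' (Nat.eq_zero_of_zero_dvd hddvd)
  have hnegτd : (-τ) ^ d = 1 := by
    have h1 : (r * ℓ) ^ d = 1 := pow_orderOf_eq_one _
    have hC : (∑ i ∈ Finset.range d, (-τ) ^ i) (τ t) = 0 := by
      have e2 := hpowrl d 0
      have z1 : (1 : M ≃ᵃ[K] M) (0 : M) = 0 := rfl
      have z2 : ((-τ) ^ d) (0 : M) = 0 := map_zero _
      rw [h1, z1, z2, zero_add] at e2
      exact e2.symm
    apply LinearMap.ext
    intro x
    have e1 := hpowrl d x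
    rw [h1, hC, add_zero] at e1
    exact e1.symm
  have hβd : β ∣ d := by
    rcases Nat.even_or_odd d with he | ho
    · have h1 : τ ^ d = 1 := by rw [← Even.neg_pow he]; exact hnegτd
      have h2 : α ∣ d := (hσone d).mp ((hτσ d).mp h1)
      obtain ⟨c, hc⟩ := h2
      rw [hα2] at hc
      exact ⟨2 * c, by rw [hc]; ring⟩
    · have h1 : -(τ ^ d) = 1 := by rw [← Odd.neg_pow ho]; exact hnegτd
      have hτd : τ ^ d = -1 := by
        have h2 := congrArg Neg.neg h1
        rwa [neg_neg] at h2
      have h2 : τ ^ (2 * d) = 1 := by rw [pow_mul', hτd, neg_one_sq]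
      have h3 : α ∣ 2 * d := (hσone _).mp ((hτσ _).mp h2)
      obtain ⟨c, hc⟩ := h3
      rw [hα2, mul_assoc] at hc
      exact ⟨c, by omega⟩
  obtain ⟨e, hde⟩ := hβd
  have hedvd : e ∣ p := by
    have h1 : β * e ∣ β * p := by rw [← hde, mul_comm β p]; exact hddvd
    exact (Nat.mul_dvd_mul_iff_left hβpos).mp h1
  -- polynomial factorization facts
  have hπirr : Irreducible (X - 1 : K[X]) := by
    have h1 := irreducible_X_sub_C (1 : K); rwa [C_1] at h1
  have hπprime : Prime (X - 1 : K[X]) := hπirr.prime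
  have hπ0 : (X - 1 : K[X]) ≠ 0 := by
    have h1 := X_sub_C_ne_zero (1 : K); rwa [C_1] at h1
  set G₂ : Polynomial K := ∑ i ∈ Finset.range k2, X ^ i with hG₂
  have hπG₂ : ¬ (X - 1 : K[X]) ∣ G₂ := by
    rw [← C_1, dvd_iff_isRoot]
    intro hroot
    have h1 : G₂.eval 1 = (k2 : K) := by
      rw [hG₂, eval_finset_sum]
      simp
    rw [IsRoot.def, h1] at hroot
    have h2 : p ∣ k2 := (CharP.cast_eq_zero_iff K p k2).mp hroot
    exact hk (h2.trans ⟨2, by omega⟩)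
  have hfact : (X ^ β - 1 : K[X]) = (X - 1) ^ N * G₂ ^ N := by
    have h1 : (X ^ β - 1 : K[X]) = (X ^ k2) ^ N - 1 ^ N := by
      rw [← pow_mul, one_pow, hβdef]
    rw [h1, ← sub_pow_char_pow, ← geom_sum_mul, mul_pow, mul_comm]
  have hNsub : N - 1 + 1 = N := by omega
  have hGfact : G = (X - 1) ^ (N - 1) * G₂ ^ N := by
    have h1 : G * (X - 1) = X ^ β - 1 := geom_sum_mul X β
    have h2 : ((X - 1 : K[X]) ^ (N - 1) * G₂ ^ N) * (X - 1) = X ^ β - 1 := by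
      rw [hfact]
      have h3 : (X - 1 : K[X]) ^ (N - 1) * (X - 1) = (X - 1) ^ N := by
        rw [← pow_succ, hNsub]
      calc ((X - 1 : K[X]) ^ (N - 1) * G₂ ^ N) * (X - 1)
          = ((X - 1) ^ (N - 1) * (X - 1)) * G₂ ^ N := by ring
        _ = (X - 1) ^ N * G₂ ^ N := by rw [h3]
    exact mul_right_cancel₀ hπ0 (h1.trans h2.symm)
  have hf₁X : f₁ ∣ (X ^ β - 1 : K[X]) := by
    rw [hf₁']
    apply minpoly.dvd
    rw [map_sub, map_pow, aeval_X, map_one, ← pow_mul, hτ2β, sub_self]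
  have hpoly_dvd : ¬ (X - 1 : K[X]) ^ N ∣ f₁ → f₁ ∣ G := by
    intro hnot
    have hex : ∃ i, ¬ (X - 1 : K[X]) ^ (i + 1) ∣ f₁ := ⟨N - 1, by rwa [hNsub]⟩
    set j := Nat.find hex with hj
    have hj1 : ¬ (X - 1 : K[X]) ^ (j + 1) ∣ f₁ := Nat.find_spec hex
    have hjN : j ≤ N - 1 := Nat.find_le (by rwa [hNsub])
    have hjdvd : (X - 1 : K[X]) ^ j ∣ f₁ := by
      rcases Nat.eq_zero_or_pos j with h0 | h0
      · rw [h0, pow_zero]; exact one_dvd _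
      · have h2 := Nat.find_min hex (show j - 1 < j by omega)
        rw [not_not] at h2
        rwa [show j - 1 + 1 = j by omega] at h2
    obtain ⟨w, hw⟩ := hjdvd
    have hπw : ¬ (X - 1 : K[X]) ∣ w := by
      rintro ⟨v, hv⟩
      apply hj1
      rw [hw, hv]
      exact ⟨v, by ring⟩
    have hwd : w ∣ (X - 1 : K[X]) ^ (N - j) * G₂ ^ N := by
      have h1 : (X - 1 : K[X]) ^ j * w ∣
          (X - 1) ^ j * ((X - 1) ^ (N - j) * G₂ ^ N) := by
        rw [← mul_assoc, ← pow_add, show j + (N - j) = N by omega, ← hfact, ← hw]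
        exact hf₁X
      exact (mul_dvd_mul_iff_left (pow_ne_zero j hπ0)).mp h1
    have hcop : IsCoprime w ((X - 1 : K[X]) ^ (N - j)) :=
      hπirr.coprime_pow_of_not_dvd _ hπw
    have hwu : w ∣ G₂ ^ N := hcop.dvd_of_dvd_mul_left hwd
    rw [hGfact, hw]
    exact mul_dvd_mul (pow_dvd_pow _ (by omega : j ≤ N - 1)) hwu
  have hpoly_ndvd : (X - 1 : K[X]) ^ N ∣ f₁ → ¬ f₁ ∣ G := by
    intro hdvd hfG
    have h1 : (X - 1 : K[X]) ^ (N - 1) * (X - 1) ∣ (X - 1) ^ (N - 1) * G₂ ^ N := by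
      rw [← pow_succ, hNsub, ← hGfact]
      exact hdvd.trans hfG
    have h2 : (X - 1 : K[X]) ∣ G₂ ^ N :=
      (mul_dvd_mul_iff_left (pow_ne_zero _ hπ0)).mp h1
    exact hπG₂ (hπprime.dvd_of_dvd_pow h2)
  constructor
  · -- case (X-1)^N ∤ f₁ : order = β
    intro hnot
    have hfG : f₁ ∣ G := hpoly_dvd hnot
    have hc : S (τ t) = 0 := hc_iff.mpr hfG
    have h1 : (r * ℓ) ^ β = 1 := by
      apply AffineEquiv.ext
      intro x
      rw [hrlβ, hc, add_zero]
      rfl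
    have hdβ : d ∣ β := orderOf_dvd_of_pow_eq_one h1
    rw [hβα]
    exact Nat.dvd_antisymm hdβ ⟨e, hde⟩
  · rintro ⟨hdvd, -⟩
    have hfG : ¬ f₁ ∣ G := hpoly_ndvd hdvd
    have hc : S (τ t) ≠ 0 := fun h => hfG (hc_iff.mp h)
    have hdneβ : d ≠ β := by
      intro h
      apply hc
      have h1 : (r * ℓ) ^ β = 1 := by rw [← h]; exact pow_orderOf_eq_one _
      have h2 := hrlβ 0
      rw [h1, zero_add] at h2
      exact h2.symm
    rcases (Nat.Prime.eq_one_or_self_of_dvd hp e hedvd) with h1 | h1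
    · exact absurd (by rw [hde, h1, mul_one]) hdneβ
    · rw [hβα, hde, h1, mul_comm]

/-- Let `p` be an odd prime, `σ ∈ GL(n,p)` of order `α = k·p^m` with `p ∤ k` and
`k ≡ 2 (mod 4)`, with `σ^(α/2) = -I`, and `t` generating `T` as a `⟨σ⟩`-module.  Let
`f₁` be the minimal polynomial of `σ²` and set `r = σ`, `ℓ = t·(-I)`.  Then
`o(rℓ) = α/2` if `(x-1)^(p^m) ∤ f₁`, and `o(rℓ) = p·α/2` if `(x-1)^(p^m)` exactly
divides `f₁`. -/
theorem stmt_14 (p n : ℕ) (hp : p.Prime) (hodd : p ≠ 2) [Fact p.Prime]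
    (σ : (Fin n → ZMod p) ≃ₗ[ZMod p] (Fin n → ZMod p))
    (k m α : ℕ) (hk : ¬ p ∣ k) (hk2 : k % 4 = 2)
    (hα : α = k * p ^ m) (horder : orderOf σ = α)
    (hneg : σ ^ (α / 2) = LinearEquiv.neg (ZMod p))
    (t : Fin n → ZMod p)
    (hspan : Submodule.span (ZMod p) (Set.range fun i : ℕ => (σ ^ i) t) = ⊤)
    (f₁ : Polynomial (ZMod p))
    (hf₁ : f₁ = minpoly (ZMod p) (σ ^ 2).toLinearMap)
    (r ℓ : (Fin n → ZMod p) ≃ᵃ[ZMod p] (Fin n → ZMod p))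
    (hr : r = σ.toAffineEquiv)
    (hℓ : ℓ = AffineEquiv.constVAdd (ZMod p) (Fin n → ZMod p) t *
      (LinearEquiv.neg (ZMod p)).toAffineEquiv) :
    (¬ (X - 1) ^ p ^ m ∣ f₁ → orderOf (r * ℓ) = α / 2) ∧
    ((X - 1) ^ p ^ m ∣ f₁ ∧ ¬ (X - 1) ^ (p ^ m + 1) ∣ f₁ →
      orderOf (r * ℓ) = p * (α / 2)) := by
  exact aux_main p hodd σ k m α hk hk2 hα horder hneg t hspan f₁ hf₁ r ℓ hr hℓ
end

section
/- Let σ ∈ GL(n,2) of order α = k·2^m with k odd, T ≅ F_2^n the translation group, t ∈ T with ⟨t⟩^{⟨σ⟩} = T, and let f(x) be the minimal polynomial of σ. In T ⋊ ⟨σ⟩, set r = σ and ℓ = t. Then o(rℓ) = α if (x-1)^{2^m} does not divide f(x), and o(rℓ) = 2α if (x-1)^{2^m} exactly divides f(x). -/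
open Polynomial

/-- Let `σ ∈ GL(n,2)` of order `α = k·2^m` with `k` odd, `t` generating `T` as a
`⟨σ⟩`-module, and `f` the minimal polynomial of `σ`.  In `T ⋊ ⟨σ⟩` set `r = σ`, `ℓ = t`.
Then `o(rℓ) = α` if `(x-1)^(2^m) ∤ f`, and `o(rℓ) = 2α` if `(x-1)^(2^m)` exactly
divides `f`. -/
theorem stmt_15 (n : ℕ)
    (σ : (Fin n → ZMod 2) ≃ₗ[ZMod 2] (Fin n → ZMod 2))
    (k m α : ℕ) (hk : Odd k) (hα : α = k * 2 ^ m) (horder : orderOf σ = α)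
    (t : Fin n → ZMod 2)
    (hspan : Submodule.span (ZMod 2) (Set.range fun i : ℕ => (σ ^ i) t) = ⊤)
    (f : Polynomial (ZMod 2)) (hf : f = minpoly (ZMod 2) σ.toLinearMap)
    (r ℓ : (Fin n → ZMod 2) ≃ᵃ[ZMod 2] (Fin n → ZMod 2))
    (hr : r = σ.toAffineEquiv)
    (hℓ : ℓ = AffineEquiv.constVAdd (ZMod 2) (Fin n → ZMod 2) t) :
    (¬ (X - 1) ^ 2 ^ m ∣ f → orderOf (r * ℓ) = α) ∧
    ((X - 1) ^ 2 ^ m ∣ f ∧ ¬ (X - 1) ^ (2 ^ m + 1) ∣ f →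
      orderOf (r * ℓ) = 2 * α) := by
  set E : (Fin n → ZMod 2) →ₗ[ZMod 2] (Fin n → ZMod 2) := σ.toLinearMap with hE
  have h2m : 0 < 2 ^ m := pow_pos two_pos m
  have hα0 : α ≠ 0 := by
    rcases hk with ⟨j, hj⟩
    subst hα hj
    positivity
  have hσα : σ ^ α = 1 := by rw [← horder]; exact pow_orderOf_eq_one σ
  have hpow : ∀ (i : ℕ) (x : Fin n → ZMod 2), (σ ^ i) x = (E ^ i) x := by
    intro i x
    rw [LinearEquiv.pow_apply, Module.End.pow_apply]
    rfl
  have hEα : E ^ α = 1 := by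
    refine LinearMap.ext fun x => ?_
    rw [← hpow, hσα]
    rfl
  -- f divides X^α - 1
  have fdvd : f ∣ X ^ α - 1 := by
    rw [hf]
    apply minpoly.dvd
    simp [hEα]
  have hXα_ne : (X ^ α - 1 : (ZMod 2)[X]) ≠ 0 := by
    intro h
    have := congrArg (eval 0) h
    simp [zero_pow hα0] at this
  have f_ne : f ≠ 0 := by
    rintro rfl
    exact hXα_ne (zero_dvd_iff.mp fdvd)
  -- polynomial setup
  set g : (ZMod 2)[X] := ∑ i ∈ Finset.range α, X ^ i with hgdef
  have hg : g * (X - 1) = X ^ α - 1 := geom_sum_mul X α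
  set Q : (ZMod 2)[X] := (∑ i ∈ Finset.range k, X ^ i) ^ 2 ^ m with hQdef
  have hfac : (X ^ α - 1 : (ZMod 2)[X]) = (X - 1) ^ 2 ^ m * Q := by
    have h1 : (X ^ k - 1 : (ZMod 2)[X]) = (X - 1) * ∑ i ∈ Finset.range k, X ^ i := by
      rw [mul_comm, geom_sum_mul]
    have h2 : ((X ^ k - 1 : (ZMod 2)[X])) ^ 2 ^ m = X ^ α - 1 := by
      have h3 := add_pow_char_pow (X ^ k : (ZMod 2)[X]) (-1) 2 m
      calc ((X ^ k - 1 : (ZMod 2)[X])) ^ 2 ^ m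
          = (X ^ k) ^ 2 ^ m + (-1) ^ 2 ^ m := by rw [sub_eq_add_neg, h3]
        _ = X ^ α - 1 := by
            rw [← pow_mul, ← hα]
            simp [CharTwo.sub_eq_add, CharTwo.neg_eq]
    rw [← h2, h1, mul_pow]
  have X1_ne : (X - 1 : (ZMod 2)[X]) ≠ 0 := by
    have := X_sub_C_ne_zero (1 : ZMod 2)
    rwa [map_one] at this
  have prime_X1 : Prime (X - 1 : (ZMod 2)[X]) := by
    have := irreducible_X_sub_C (1 : ZMod 2)
    rw [map_one] at this
    exact this.prime
  have hQnd : ¬ (X - 1 : (ZMod 2)[X]) ∣ Q := by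
    intro hd
    have hdvd : (X - 1 : (ZMod 2)[X]) ∣ ∑ i ∈ Finset.range k, X ^ i :=
      prime_X1.dvd_of_dvd_pow hd
    have hdvd' : (X - C (1 : ZMod 2)) ∣ ∑ i ∈ Finset.range k, X ^ i := by
      rwa [map_one]
    have := dvd_iff_isRoot.mp hdvd'
    simp only [IsRoot, eval_geom_sum, one_pow, Finset.sum_const, Finset.card_range,
      nsmul_eq_mul, mul_one] at this
    rcases hk with ⟨j, hj⟩
    rw [hj] at this
    push_cast at this
    exact one_ne_zero (by rwa [show ((2:ZMod 2)) = 0 by decide, zero_mul, zero_add] at this)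
  have hgQ : g = (X - 1) ^ (2 ^ m - 1) * Q := by
    have hsp : (2 : ℕ) ^ m - 1 + 1 = 2 ^ m := Nat.succ_pred_eq_of_pos h2m
    apply mul_right_cancel₀ X1_ne
    rw [hg, hfac, mul_right_comm, ← pow_succ, hsp]
  -- main polynomial dichotomy
  have hcase1 : ¬ (X - 1) ^ 2 ^ m ∣ f → f ∣ g := by
    intro hnd
    obtain ⟨h, hfh, hhnd⟩ := exists_eq_pow_rootMultiplicity_mul_and_not_dvd f f_ne 1
    rw [map_one] at hfh hhnd
    set e := rootMultiplicity 1 f with he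
    have hle : e ≤ 2 ^ m - 1 := by
      by_contra hlt
      push_neg at hlt
      have h2e : 2 ^ m ≤ e := by omega
      exact hnd ((pow_dvd_pow _ h2e).trans (hfh ▸ Dvd.intro _ rfl))
    have hh : h ∣ (X - 1) ^ 2 ^ m * Q := by
      refine dvd_trans ?_ (hfac ▸ fdvd)
      exact hfh ▸ Dvd.intro_left _ rfl
    have hcop : IsCoprime ((X - 1 : (ZMod 2)[X]) ^ 2 ^ m) h :=
      (prime_X1.irreducible.coprime_iff_not_dvd.mpr hhnd).pow_left
    have hhQ : h ∣ Q := (hcop.symm).dvd_of_dvd_mul_left hh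
    rw [hfh, hgQ]
    exact mul_dvd_mul (pow_dvd_pow _ hle) hhQ
  have hcase2 : (X - 1) ^ 2 ^ m ∣ f → ¬ f ∣ g := by
    intro hd hfg
    have h1 : (X - 1 : (ZMod 2)[X]) ^ 2 ^ m ∣ (X - 1) ^ (2 ^ m - 1) * Q :=
      hgQ ▸ hd.trans hfg
    have hsp : (2 : ℕ) ^ m = 2 ^ m - 1 + 1 := (Nat.succ_pred_eq_of_pos h2m).symm
    rw [hsp, pow_succ] at h1
    exact hQnd ((mul_dvd_mul_iff_left (pow_ne_zero (2 ^ m - 1) X1_ne)).mp h1)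
  -- operator bridge
  have hkill : ∀ p : (ZMod 2)[X], (aeval E p) t = 0 → aeval E p = 0 := by
    intro p hp
    apply LinearMap.ker_eq_top.mp
    rw [eq_top_iff, ← hspan, Submodule.span_le]
    rintro _ ⟨i, rfl⟩
    simp only [SetLike.mem_coe, LinearMap.mem_ker]
    have hc : aeval E p * aeval E ((X : (ZMod 2)[X]) ^ i) = aeval E ((X : (ZMod 2)[X]) ^ i) * aeval E p := by
      rw [← map_mul, ← map_mul, mul_comm]
    have hxi : (σ ^ i) t = (aeval E ((X : (ZMod 2)[X]) ^ i)) t := by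
      rw [hpow]; simp
    rw [hxi, ← Module.End.mul_apply, hc, Module.End.mul_apply, hp, map_zero]
  set S : (Fin n → ZMod 2) →ₗ[ZMod 2] (Fin n → ZMod 2) := aeval E g with hS
  have hSdvd : S = 0 ↔ f ∣ g := by
    constructor
    · intro h0
      rw [hf]
      exact minpoly.dvd _ _ h0
    · rintro ⟨q, hq⟩
      rw [hS, hq, map_mul, hf, minpoly.aeval, zero_mul]
  -- affine computation
  set c : Fin n → ZMod 2 := E (S t) with hc
  have hrl : ∀ x : Fin n → ZMod 2, (r * ℓ) x = σ t + σ x := by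
    intro x
    rw [hr, hℓ]
    show σ.toAffineEquiv ((AffineEquiv.constVAdd (ZMod 2) (Fin n → ZMod 2) t) x) = _
    rw [AffineEquiv.constVAdd_apply]
    show σ (t +ᵥ x) = _
    rw [vadd_eq_add, map_add]
  have key : ∀ (j : ℕ) (x : Fin n → ZMod 2), ((r * ℓ) ^ j) x
      = (σ ^ j) x + (∑ i ∈ Finset.range j, E ^ (i + 1)) t := by
    intro j
    induction j with
    | zero => intro x; simp
    | succ j ih =>
      intro x
      rw [pow_succ]
      show ((r * ℓ) ^ j) ((r * ℓ) x) = _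
      rw [hrl, ih, map_add, Finset.sum_range_succ, LinearMap.add_apply]
      have h1 : (σ ^ j) (σ x) = (σ ^ (j + 1)) x := by
        rw [pow_succ]; rfl
      have h2 : (σ ^ j) (σ t) = (E ^ (j + 1)) t := by
        rw [hpow, pow_succ, Module.End.mul_apply]; rfl
      rw [h1, h2]
      abel
  have hwα : (∑ i ∈ Finset.range α, E ^ (i + 1)) t = c := by
    have hsum : (∑ i ∈ Finset.range α, E ^ (i + 1)) = E * S := by
      rw [hS, hgdef, map_sum, Finset.mul_sum]
      refine Finset.sum_congr rfl fun i _ => ?_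
      rw [aeval_X_pow, pow_succ']
    rw [hsum, Module.End.mul_apply, hc]
  have hkeyα : ∀ x : Fin n → ZMod 2, ((r * ℓ) ^ α) x = x + c := by
    intro x
    rw [key, hwα, hσα]
    rfl
  have hciff : c = 0 ↔ f ∣ g := by
    rw [← hSdvd]
    constructor
    · intro h0
      have hc0 : S t = 0 := by
        apply σ.injective
        rw [map_zero]
        exact h0
      exact hkill g hc0
    · intro h0
      rw [hc, h0]
      simp
  have hdvd_order : ∀ j, (r * ℓ) ^ j = 1 → α ∣ j := by
    intro j h1
    have hx : ∀ x, (σ ^ j) x + (∑ i ∈ Finset.range j, E ^ (i + 1)) t = x := by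
      intro x
      rw [← key, h1]
      rfl
    have hw : (∑ i ∈ Finset.range j, E ^ (i + 1)) t = 0 := by
      have := hx 0
      rwa [map_zero, zero_add] at this
    have hσj : σ ^ j = 1 := by
      refine LinearEquiv.ext fun x => ?_
      have := hx x
      rw [hw, add_zero] at this
      simpa using this
    rw [← horder]
    exact orderOf_dvd_of_pow_eq_one hσj
  constructor
  · intro hnd
    have hc0 : c = 0 := hciff.mpr (hcase1 hnd)
    have h1 : (r * ℓ) ^ α = 1 := by
      refine AffineEquiv.ext fun x => ?_
      rw [hkeyα, hc0, add_zero]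
      rfl
    exact Nat.dvd_antisymm (orderOf_dvd_of_pow_eq_one h1)
      (hdvd_order _ (pow_orderOf_eq_one _))
  · rintro ⟨hd, -⟩
    have hcne : c ≠ 0 := fun h => hcase2 hd (hciff.mp h)
    have hne : (r * ℓ) ^ α ≠ 1 := by
      intro h1
      apply hcne
      have h2 := hkeyα 0
      rw [h1] at h2
      simpa using h2.symm
    have hcc : c + c = 0 := by
      have : c + c = (1 + 1 : ZMod 2) • c := by rw [add_smul, one_smul]
      rw [this, show (1 + 1 : ZMod 2) = 0 by decide, zero_smul]
    have h2α : (r * ℓ) ^ (2 * α) = 1 := by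
      refine AffineEquiv.ext fun x => ?_
      rw [mul_comm 2 α, pow_mul, sq]
      show ((r * ℓ) ^ α) (((r * ℓ) ^ α) x) = _
      rw [hkeyα, hkeyα, add_assoc, hcc, add_zero]
      rfl
    have ho2 : orderOf (r * ℓ) ∣ 2 * α := orderOf_dvd_of_pow_eq_one h2α
    obtain ⟨d, hd'⟩ := hdvd_order _ (pow_orderOf_eq_one (r * ℓ))
    have hd2 : d ∣ 2 := by
      have hh : α * d ∣ α * 2 := by
        rw [← hd']
        rw [mul_comm 2 α] at ho2
        exact ho2
      exact (Nat.mul_dvd_mul_iff_left (Nat.pos_of_ne_zero hα0)).mp hh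
    rcases Nat.prime_two.eq_one_or_self_of_dvd d hd2 with h1 | h1
    · exfalso
      apply hne
      rw [show α = orderOf (r * ℓ) by rw [hd', h1, mul_one]]
      exact pow_orderOf_eq_one _
    · rw [hd', h1, mul_comm]
end
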